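/- arXiv:2405.11201 — 7 statements merged into one kernel-verified Lean document; each statement's English description precedes it below -/
import Mathlib

section
/- Let f be a pdf that is continuous and strictly positive on an open interval S and zero outside S, with cdf F, and let w : ℝ → [0,∞) be measurable with ∫ w(x) f(x)^2 dx < ∞. Then for all integers n ≥ 1 and 1 ≤ i ≤ n, ∫_{-∞}^{∞} w(x) f_{i:n}(x)^2 dx = n · C_{i,n} · ∫_0^1 Λ_X^w(u) φ_{2i-1:2n-1}(u) du. -/
open MeasureTheory Real Set

/-- The cdf associated with a pdf `f`. -/
noncomputable def cdfOf (f : ℝ → ℝ) (x : ℝ) : ℝ := ∫ t in Iic x, f t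

/-- Quantile function `F⁻¹(u) = inf {x : F x ≥ u}`. -/
noncomputable def qf (F : ℝ → ℝ) (u : ℝ) : ℝ := sInf {x | u ≤ F x}

/-- pdf of the `i`-th order statistic of an i.i.d. sample of size `n` from pdf `f`, cdf `F`. -/
noncomputable def osPdf (f F : ℝ → ℝ) (i n : ℕ) (x : ℝ) : ℝ :=
  ((Nat.factorial n : ℝ) / ((Nat.factorial (i - 1) : ℝ) * (Nat.factorial (n - i) : ℝ))) *
    F x ^ (i - 1) * (1 - F x) ^ (n - i) * f x

/-- `φ_{2i-1:2n-1}`, the pdf of a Beta(2i-1, 2n-2i+1) random variable. -/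
noncomputable def betaPdf (i n : ℕ) (u : ℝ) : ℝ :=
  ((Nat.factorial (2 * n - 1) : ℝ) /
      ((Nat.factorial (2 * i - 2) : ℝ) * (Nat.factorial (2 * n - 2 * i) : ℝ))) *
    u ^ (2 * i - 2) * (1 - u) ^ (2 * n - 2 * i)

/-- The constant `C_{i,n}`. -/
noncomputable def Cin (i n : ℕ) : ℝ :=
  ((Nat.choose (2 * i - 2) (i - 1) : ℝ) * (Nat.choose (2 * n - 2 * i) (n - i) : ℝ)) /
    (Nat.choose (2 * n - 1) (n - 1) : ℝ)

/-- General weighted extropy of the PRSS data with sample size `n` and rank parameters `a, b`. -/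
noncomputable def Jprss (w f F : ℝ → ℝ) (n a b : ℕ) : ℝ :=
  if Even n then
    -(1 / 2) * (∫ x, w x * osPdf f F a n x ^ 2) ^ (n / 2) *
      (∫ x, w x * osPdf f F b n x ^ 2) ^ (n / 2)
  else
    -(1 / 2) * (∫ x, w x * osPdf f F a n x ^ 2) ^ ((n - 1) / 2) *
      (∫ x, w x * osPdf f F b n x ^ 2) ^ ((n - 1) / 2) *
      (∫ x, w x * osPdf f F ((n + 1) / 2) n x ^ 2)

/-- pdf `ψ_{2i-1:2n}` of the (2i-1)-th order statistic of a standard exponential sample of size 2n. -/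
noncomputable def expOsPdf (i n : ℕ) (x : ℝ) : ℝ :=
  ((Nat.factorial (2 * n) : ℝ) /
      ((Nat.factorial (2 * i - 2) : ℝ) * (Nat.factorial (2 * n - 2 * i + 1) : ℝ))) *
    (1 - Real.exp (-x)) ^ (2 * i - 2) * Real.exp (-(((2 * n - 2 * i + 2 : ℕ) : ℝ) * x))

open Filter Topology

section auxiliary


section aux
variable {f : ℝ → ℝ} {S : Set ℝ}

lemma hf0 (hfpos : ∀ x ∈ S, 0 < f x) (hfzero : ∀ x ∉ S, f x = 0) (x : ℝ) : 0 ≤ f x := by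
  by_cases hx : x ∈ S
  · exact (hfpos x hx).le
  · simp [hfzero x hx]

lemma cdf_mono (hfint : Integrable f) (hnn : ∀ x, 0 ≤ f x) : Monotone (cdfOf f) := by
  intro a b hab
  exact setIntegral_mono_set hfint.integrableOn (ae_of_all _ hnn)
    ((Iic_subset_Iic.2 hab).eventuallyLE)

lemma cdf_eq (hfint : Integrable f) (x : ℝ) :
    cdfOf f x = cdfOf f 0 + ∫ t in (0:ℝ)..x, f t := by
  rw [← intervalIntegral.integral_Iic_sub_Iic hfint.integrableOn hfint.integrableOn]
  unfold cdfOf; ring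

lemma cdf_cont (hfint : Integrable f) : Continuous (cdfOf f) := by
  have : Continuous fun x => cdfOf f 0 + ∫ t in (0:ℝ)..x, f t :=
    continuous_const.add
      (intervalIntegral.continuous_primitive (fun a b => hfint.intervalIntegrable) 0)
  exact this.congr fun x => (cdf_eq hfint x).symm

lemma cdf_deriv (hS : IsOpen S) (hfc : ContinuousOn f S) (hfint : Integrable f)
    {x : ℝ} (hx : x ∈ S) : HasDerivAt (cdfOf f) (f x) x := by
  have h := intervalIntegral.integral_hasDerivAt_right
    (hfint.intervalIntegrable (a := 0) (b := x))
    (ContinuousOn.stronglyMeasurableAtFilter hS hfc x hx)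
    (hfc.continuousAt (hS.mem_nhds hx))
  have h2 := h.const_add (cdfOf f 0)
  exact h2.congr_of_eventuallyEq (Filter.Eventually.of_forall fun y => cdf_eq hfint y)

end aux

section aux2
variable {f : ℝ → ℝ} {S : Set ℝ}

lemma cdf_pos_lt_one (hS : IsOpen S) (hfpos : ∀ x ∈ S, 0 < f x) (hfzero : ∀ x ∉ S, f x = 0)
    (hfint : Integrable f) (hfpdf : ∫ x, f x = 1) {x : ℝ} (hx : x ∈ S) :
    0 < cdfOf f x ∧ cdfOf f x < 1 := by
  have hnn := hf0 hfpos hfzero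
  obtain ⟨ε, hε, hball⟩ := Metric.isOpen_iff.1 hS x hx
  rw [Real.ball_eq_Ioo] at hball
  have hsub : Ioo (x - ε/2) (x + ε/2) ⊆ S := fun t ht =>
    hball ⟨by linarith [ht.1], by linarith [ht.2]⟩
  constructor
  · have h1 : 0 < ∫ t in (x - ε/2)..x, f t := by
      apply intervalIntegral.intervalIntegral_pos_of_pos_on hfint.intervalIntegrable
      · intro t ht
        exact hfpos t (hsub ⟨ht.1, by linarith [ht.2]⟩)
      · linarith
    have h2 : 0 ≤ cdfOf f (x - ε/2) := setIntegral_nonneg measurableSet_Iic fun t _ => hnn t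
    have h3 := cdf_eq hfint x
    have h4 := cdf_eq hfint (x - ε/2)
    have h5 := intervalIntegral.integral_Iic_sub_Iic (μ := volume)
      (hfint.integrableOn (s := Iic (x - ε/2))) (hfint.integrableOn (s := Iic x))
      (a := x - ε/2) (b := x)
    unfold cdfOf at h2 h5 ⊢
    linarith
  · have h1 : 0 < ∫ t in x..(x + ε/2), f t := by
      apply intervalIntegral.intervalIntegral_pos_of_pos_on hfint.intervalIntegrable
      · intro t ht
        exact hfpos t (hsub ⟨by linarith [ht.1], ht.2⟩)
      · linarith
    have h5 := intervalIntegral.integral_Iic_sub_Iic (μ := volume)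
      (hfint.integrableOn (s := Iic x)) (hfint.integrableOn (s := Iic (x + ε/2)))
      (a := x) (b := x + ε/2)
    have h6 : cdfOf f (x + ε/2) ≤ 1 := by
      have h7 := intervalIntegral.integral_Iic_add_Ioi (b := x + ε/2)
        (hfint.integrableOn) (hfint.integrableOn)
      have h8 : 0 ≤ ∫ t in Ioi (x + ε/2), f t :=
        setIntegral_nonneg measurableSet_Ioi fun t _ => hnn t
      unfold cdfOf
      rw [hfpdf] at h7
      linarith
    unfold cdfOf at h5 h6 ⊢
    linarith

lemma cdf_strictMonoOn (hSconn : S.OrdConnected) (hfpos : ∀ x ∈ S, 0 < f x)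
    (hfint : Integrable f) : StrictMonoOn (cdfOf f) S := by
  intro x hx y hy hxy
  have h1 : 0 < ∫ t in x..y, f t := by
    apply intervalIntegral.intervalIntegral_pos_of_pos_on hfint.intervalIntegrable
    · intro t ht
      exact hfpos t (hSconn.out hx hy ⟨ht.1.le, ht.2.le⟩)
    · exact hxy
  have h5 := intervalIntegral.integral_Iic_sub_Iic (μ := volume)
    (hfint.integrableOn (s := Iic x)) (hfint.integrableOn (s := Iic y)) (a := x) (b := y)
  unfold cdfOf
  linarith

lemma cdf_zero_below (hfzero : ∀ x ∉ S, f x = 0) {x : ℝ} (hbelow : ∀ s ∈ S, x < s) :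
    cdfOf f x = 0 := by
  apply setIntegral_eq_zero_of_forall_eq_zero
  intro t ht
  apply hfzero
  intro htS
  exact absurd (hbelow t htS) (not_lt.2 ht)

lemma cdf_one_above (hfzero : ∀ x ∉ S, f x = 0) (hfint : Integrable f) (hfpdf : ∫ x, f x = 1)
    {x : ℝ} (habove : ∀ s ∈ S, s < x) : cdfOf f x = 1 := by
  have h7 := intervalIntegral.integral_Iic_add_Ioi (b := x) (hfint.integrableOn) (hfint.integrableOn)
  have h8 : ∫ t in Ioi x, f t = 0 := by
    apply setIntegral_eq_zero_of_forall_eq_zero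
    intro t ht
    apply hfzero
    intro htS
    exact absurd (habove t htS) (not_lt.2 (le_of_lt ht))
  unfold cdfOf
  rw [hfpdf] at h7
  linarith

end aux2

section aux3
variable {f : ℝ → ℝ} {S : Set ℝ}

lemma cdf_tendsto_atTop (hfint : Integrable f) (hfpdf : ∫ x, f x = 1) :
    Tendsto (cdfOf f) atTop (𝓝 1) := by
  have h := (aecover_Iic (μ := volume) (l := atTop) (b := fun x : ℝ => x)
      tendsto_id).integral_tendsto_of_countably_generated hfint
  rw [hfpdf] at h
  exact h

lemma cdf_tendsto_atBot (hfint : Integrable f) :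
    Tendsto (cdfOf f) atBot (𝓝 0) := by
  have h := (aecover_Ioi (μ := volume) (l := atBot) (a := fun x : ℝ => x)
      tendsto_id).integral_tendsto_of_countably_generated hfint
  have h2 : Tendsto (fun x : ℝ => (∫ t, f t) - ∫ t in Ioi x, f t) atBot (𝓝 0) := by
    have := tendsto_const_nhds (x := ∫ t, f t) (f := atBot (α := ℝ)) |>.sub h
    simpa using this
  apply h2.congr
  intro x
  have h7 := intervalIntegral.integral_Iic_add_Ioi (b := x) (μ := volume)
    (hfint.integrableOn) (hfint.integrableOn)
  unfold cdfOf
  linarith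

lemma cdf_sup (hS : IsOpen S) (hSne : S.Nonempty) (hfpos : ∀ x ∈ S, 0 < f x) (hfzero : ∀ x ∉ S, f x = 0)
    (hfint : Integrable f) (hfpdf : ∫ x, f x = 1) {y : ℝ} (hy : y < 1) :
    ∃ x ∈ S, y < cdfOf f x := by
  by_cases hbdd : BddAbove S
  · set b := sSup S with hb
    have hFb : cdfOf f b = 1 := by
      apply cdf_one_above hfzero hfint hfpdf
      intro s hs
      rcases lt_or_eq_of_le (le_csSup hbdd hs) with h | h
      · exact h
      · exact absurd (h ▸ hs) (fun hbS => by
          obtain ⟨ε, hε, hball⟩ := Metric.isOpen_iff.1 hS b hbS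
          rw [Real.ball_eq_Ioo] at hball
          have : b + ε/2 ∈ S := hball ⟨by linarith, by linarith⟩
          linarith [le_csSup hbdd this])
    have hev : ∀ᶠ x in 𝓝 b, y < cdfOf f x :=
      (cdf_cont hfint).continuousAt.eventually_const_lt (hFb ▸ hy)
    obtain ⟨δ, hδ, hball⟩ := Metric.eventually_nhds_iff_ball.mp hev
    obtain ⟨s, hsS, hs⟩ := exists_lt_of_lt_csSup hSne (show b - δ < b by linarith)
    refine ⟨s, hsS, hball s ?_⟩
    rw [Real.ball_eq_Ioo]
    exact ⟨by linarith, by linarith [le_csSup hbdd hsS]⟩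
  · obtain ⟨x₀, hx₀⟩ := ((cdf_tendsto_atTop hfint hfpdf).eventually_const_lt hy).exists
    obtain ⟨s, hsS, hs⟩ := not_bddAbove_iff.1 hbdd x₀
    exact ⟨s, hsS, lt_of_lt_of_le hx₀ (cdf_mono hfint (hf0 hfpos hfzero) hs.le)⟩

end aux3

section aux4
variable {f : ℝ → ℝ} {S : Set ℝ}

lemma cdf_inf (hS : IsOpen S) (hSne : S.Nonempty) (hfpos : ∀ x ∈ S, 0 < f x)
    (hfzero : ∀ x ∉ S, f x = 0) (hfint : Integrable f) {y : ℝ} (hy : 0 < y) :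
    ∃ x ∈ S, cdfOf f x < y := by
  by_cases hbdd : BddBelow S
  · set a := sInf S with ha
    have haS : a ∉ S := by
      intro haS
      obtain ⟨ε, hε, hball⟩ := Metric.isOpen_iff.1 hS a haS
      rw [Real.ball_eq_Ioo] at hball
      have : a - ε/2 ∈ S := hball ⟨by linarith, by linarith⟩
      linarith [csInf_le hbdd this]
    have hFa : cdfOf f a = 0 := by
      apply setIntegral_eq_zero_of_forall_eq_zero
      intro t ht
      apply hfzero
      intro htS
      have h1 : a ≤ t := csInf_le hbdd htS
      have h2 : t = a := le_antisymm ht h1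
      exact haS (h2 ▸ htS)
    have hev : ∀ᶠ x in 𝓝 a, cdfOf f x < y :=
      (cdf_cont hfint).continuousAt.eventually_lt_const (hFa ▸ hy)
    obtain ⟨δ, hδ, hball⟩ := Metric.eventually_nhds_iff_ball.mp hev
    obtain ⟨s, hsS, hs⟩ := exists_lt_of_csInf_lt hSne (show a < a + δ by linarith)
    refine ⟨s, hsS, hball s ?_⟩
    rw [Real.ball_eq_Ioo]
    exact ⟨by linarith [csInf_le hbdd hsS], by linarith⟩
  · obtain ⟨x₀, hx₀⟩ := ((cdf_tendsto_atBot hfint).eventually_lt_const hy).exists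
    obtain ⟨s, hsS, hs⟩ := not_bddBelow_iff.1 hbdd x₀
    exact ⟨s, hsS, lt_of_le_of_lt (cdf_mono hfint (hf0 hfpos hfzero) hs.le) hx₀⟩

end aux4

section aux5
variable {f : ℝ → ℝ} {S : Set ℝ}

lemma cdf_image (hS : IsOpen S) (hSconn : S.OrdConnected) (hSne : S.Nonempty)
    (hfc : ContinuousOn f S) (hfpos : ∀ x ∈ S, 0 < f x) (hfzero : ∀ x ∉ S, f x = 0)
    (hfint : Integrable f) (hfpdf : ∫ x, f x = 1) :
    cdfOf f '' S = Ioo 0 1 := by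
  apply Subset.antisymm
  · rintro _ ⟨x, hx, rfl⟩
    exact ⟨(cdf_pos_lt_one hS hfpos hfzero hfint hfpdf hx).1,
      (cdf_pos_lt_one hS hfpos hfzero hfint hfpdf hx).2⟩
  · rintro u ⟨hu0, hu1⟩
    obtain ⟨x1, hx1S, hx1⟩ := cdf_inf hS hSne hfpos hfzero hfint hu0
    obtain ⟨x2, hx2S, hx2⟩ := cdf_sup hS hSne hfpos hfzero hfint hfpdf hu1
    have h12 : x1 ≤ x2 := by
      by_contra h
      push_neg at h
      exact absurd (cdf_mono hfint (hf0 hfpos hfzero) h.le) (not_le.2 (by linarith))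
    have := intermediate_value_Icc h12 (cdf_cont hfint).continuousOn
    obtain ⟨x, hxI, hxu⟩ := this ⟨hx1.le, hx2.le⟩
    exact ⟨x, hSconn.out hx1S hx2S hxI, hxu⟩

lemma qf_cdf (hS : IsOpen S) (hSconn : S.OrdConnected)
    (hfpos : ∀ x ∈ S, 0 < f x) (hfzero : ∀ x ∉ S, f x = 0)
    (hfint : Integrable f) (hfpdf : ∫ x, f x = 1) {x : ℝ} (hx : x ∈ S) :
    qf (cdfOf f) (cdfOf f x) = x := by
  have hset : {y | cdfOf f x ≤ cdfOf f y} = Ici x := by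
    ext y
    simp only [mem_setOf_eq, mem_Ici]
    constructor
    · intro h
      by_contra hyx
      push_neg at hyx
      by_cases hyS : y ∈ S
      · exact absurd h (not_le.2 (cdf_strictMonoOn hSconn hfpos hfint hyS hx hyx))
      · have hy0 : cdfOf f y = 0 := by
          apply cdf_zero_below hfzero
          intro s hs
          by_contra hys
          push_neg at hys
          exact hyS (hSconn.out hs hx ⟨hys, hyx.le⟩)
        have := (cdf_pos_lt_one hS hfpos hfzero hfint hfpdf hx).1
        rw [hy0] at h
        linarith
    · intro h
      exact cdf_mono hfint (hf0 hfpos hfzero) h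
  rw [qf, hset]
  exact csInf_Ici

end aux5

lemma const_id (i n : ℕ) (hi : 1 ≤ i) (hin : i ≤ n) :
    ((Nat.factorial n : ℝ) / ((Nat.factorial (i - 1) : ℝ) * (Nat.factorial (n - i) : ℝ)))^2
      = (n : ℝ) * Cin i n *
        ((Nat.factorial (2 * n - 1) : ℝ) /
          ((Nat.factorial (2 * i - 2) : ℝ) * (Nat.factorial (2 * n - 2 * i) : ℝ))) := by
  obtain ⟨j, rfl⟩ : ∃ j, i = j + 1 := ⟨i - 1, by omega⟩
  obtain ⟨m, rfl⟩ : ∃ m, n = j + 1 + m := ⟨n - (j + 1), by omega⟩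
  unfold Cin
  have e1 : j + 1 - 1 = j := by omega
  have e2 : j + 1 + m - (j + 1) = m := by omega
  have e3 : 2 * (j + 1) - 2 = 2 * j := by omega
  have e4 : 2 * (j + 1 + m) - 2 * (j + 1) = 2 * m := by omega
  have e5 : 2 * (j + 1 + m) - 1 = 2 * j + 2 * m + 1 := by omega
  have e6 : j + 1 + m - 1 = j + m := by omega
  rw [e1, e2, e3, e4, e5, e6]
  rw [Nat.cast_choose ℝ (show j ≤ 2 * j by omega),
      Nat.cast_choose ℝ (show m ≤ 2 * m by omega),
      Nat.cast_choose ℝ (show j + m ≤ 2 * j + 2 * m + 1 by omega)]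
  have h1 : 2 * j - j = j := by omega
  have h2 : 2 * m - m = m := by omega
  have h3 : 2 * j + 2 * m + 1 - (j + m) = j + m + 1 := by omega
  rw [h1, h2, h3]
  have f0 : ∀ k : ℕ, ((Nat.factorial k : ℝ)) ≠ 0 := fun k =>
    Nat.cast_ne_zero.2 (Nat.factorial_ne_zero k)
  have hfs : ((Nat.factorial (j + 1 + m) : ℝ)) = ((j : ℝ) + 1 + m) * Nat.factorial (j + m) := by
    have : j + 1 + m = (j + m) + 1 := by omega
    rw [this, Nat.factorial_succ]
    push_cast; ring
  have hfs2 : ((Nat.factorial (j + m + 1) : ℝ)) = ((j : ℝ) + m + 1) * Nat.factorial (j + m) := by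
    rw [Nat.factorial_succ]; push_cast; ring
  rw [hfs, hfs2]
  field_simp
  push_cast
  ring

end auxiliary

/-- representation of the weighted integral of the squared order-statistic pdf
as `n · C_{i,n}` times an integral against the Beta pdf `φ_{2i-1:2n-1}`. -/
theorem weighted_osPdf_sq_integral_repr
    (f w : ℝ → ℝ) (S : Set ℝ)
    (hS : IsOpen S) (hSconn : S.OrdConnected)
    (hfc : ContinuousOn f S) (hfpos : ∀ x ∈ S, 0 < f x) (hfzero : ∀ x ∉ S, f x = 0)
    (hfint : Integrable f) (hfpdf : ∫ x, f x = 1)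
    (hw : Measurable w) (hwnn : ∀ x, 0 ≤ w x)
    (hwf : Integrable (fun x => w x * f x ^ 2)) :
    ∀ n : ℕ, 1 ≤ n → ∀ i : ℕ, 1 ≤ i → i ≤ n →
      ∫ x, w x * osPdf f (cdfOf f) i n x ^ 2 =
        (n : ℝ) * Cin i n *
          ∫ u in (0:ℝ)..1,
            (w (qf (cdfOf f) u) * f (qf (cdfOf f) u)) * betaPdf i n u := by
  intro n hn i hi hin
  have hSne : S.Nonempty := by
    rcases S.eq_empty_or_nonempty with h | h
    · exfalso
      have hz : ∀ x, f x = 0 := fun x => hfzero x (by simp [h])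
      simp only [hz, integral_zero] at hfpdf
      norm_num at hfpdf
    · exact h
  have hnn := hf0 hfpos hfzero
  have key := integral_image_eq_integral_abs_deriv_smul hS.measurableSet
    (fun x hx => (cdf_deriv hS hfc hfint hx).hasDerivWithinAt)
    ((cdf_strictMonoOn hSconn hfpos hfint).injOn)
    (fun u => (w (qf (cdfOf f) u) * f (qf (cdfOf f) u)) * betaPdf i n u)
  have hvanish : ∀ x ∉ S, w x * osPdf f (cdfOf f) i n x ^ 2 = 0 := fun x hx => by
    simp [osPdf, hfzero x hx]
  rw [intervalIntegral.integral_of_le zero_le_one, integral_Ioc_eq_integral_Ioo,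
    ← cdf_image hS hSconn hSne hfc hfpos hfzero hfint hfpdf, key,
    ← setIntegral_eq_integral_of_forall_compl_eq_zero hvanish, ← integral_const_mul]
  apply setIntegral_congr_fun hS.measurableSet
  intro x hx
  simp only [smul_eq_mul]
  rw [qf_cdf hS hSconn hfpos hfzero hfint hfpdf hx, abs_of_nonneg (hnn x)]
  unfold osPdf betaPdf
  have hp1 : cdfOf f x ^ (2 * i - 2) = (cdfOf f x ^ (i - 1)) ^ 2 := by
    rw [← pow_mul]; congr 1; omega
  have hp2 : (1 - cdfOf f x) ^ (2 * n - 2 * i) = ((1 - cdfOf f x) ^ (n - i)) ^ 2 := by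
    rw [← pow_mul]; congr 1; omega
  rw [hp1, hp2]
  have hc := const_id i n hi hin
  linear_combination (w x * f x ^ 2 * ((cdfOf f x) ^ (i - 1)) ^ 2 *
    ((1 - cdfOf f x) ^ (n - i)) ^ 2) * hc
end

section
/- Let f be a pdf that is continuous and strictly positive on an open interval S and zero outside S, with cdf F, and let w : ℝ → [0,∞) be measurable with ∫ w(x) f(x)^2 dx < ∞. Let n ≥ 2 be even and let a, b be integers with 1 ≤ a, b ≤ n. Then J^w(X_PRSS^(n)) = -(Q_{1,n}/2) · (∫_0^1 Λ_X^w(u) φ_{2a-1:2n-1}(u) du)^{n/2} · (∫_0^1 Λ_X^w(u) φ_{2b-1:2n-1}(u) du)^{n/2}, where Q_{1,n} = n^n · C_{a,n}^{n/2} · C_{b,n}^{n/2}. -/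
open MeasureTheory Real Set
open Filter Topology

lemma my_cdf_facts
    (f : ℝ → ℝ) (S : Set ℝ)
    (hS : IsOpen S) (hSconn : S.OrdConnected)
    (hfc : ContinuousOn f S) (hfpos : ∀ x ∈ S, 0 < f x) (hfzero : ∀ x ∉ S, f x = 0)
    (hfint : Integrable f) (hfpdf : ∫ x, f x = 1) :
    (∀ x ∈ S, HasDerivAt (cdfOf f) (f x) x) ∧ StrictMonoOn (cdfOf f) S ∧
      (∀ x ∈ S, qf (cdfOf f) (cdfOf f x) = x) ∧ cdfOf f '' S = Ioo 0 1 := by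
  have hfnn : ∀ x, 0 ≤ f x := by
    intro x; by_cases hx : x ∈ S
    · exact (hfpos x hx).le
    · simp [hfzero x hx]
  have hmono : Monotone (cdfOf f) := fun x y hxy =>
    setIntegral_mono_set hfint.integrableOn (ae_of_all _ hfnn)
      (HasSubset.Subset.eventuallyLE (Iic_subset_Iic.mpr hxy))
  have hFeq : cdfOf f = fun x => (∫ t in Iic (0:ℝ), f t) + ∫ t in (0:ℝ)..x, f t := by
    funext x
    rw [← intervalIntegral.integral_Iic_sub_Iic hfint.integrableOn hfint.integrableOn]
    unfold cdfOf; ring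
  have hFcont : Continuous (cdfOf f) := by
    rw [hFeq]; exact continuous_const.add (hfint.continuous_primitive 0)
  have hFderiv : ∀ x ∈ S, HasDerivAt (cdfOf f) (f x) x := by
    intro x hx
    rw [hFeq]
    exact (intervalIntegral.integral_hasDerivAt_right hfint.intervalIntegrable
      ⟨S, hS.mem_nhds hx, hfc.aestronglyMeasurable hS.measurableSet⟩
      (hfc.continuousAt (hS.mem_nhds hx))).const_add _
  have hstrict : StrictMonoOn (cdfOf f) S := by
    intro x hx y hy hxy
    have h1 : cdfOf f y - cdfOf f x = ∫ t in x..y, f t :=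
      intervalIntegral.integral_Iic_sub_Iic hfint.integrableOn hfint.integrableOn
    have h2 : 0 < ∫ t in x..y, f t :=
      intervalIntegral.intervalIntegral_pos_of_pos_on hfint.intervalIntegrable
        (fun t ht => hfpos t (hSconn.out hx hy ⟨ht.1.le, ht.2.le⟩)) hxy
    linarith
  have hle1 : ∀ y, cdfOf f y ≤ 1 := fun y =>
    hfpdf ▸ setIntegral_le_integral hfint (ae_of_all _ hfnn)
  have hge0 : ∀ y, 0 ≤ cdfOf f y := fun y =>
    setIntegral_nonneg measurableSet_Iic fun t _ => hfnn t
  have hball : ∀ x ∈ S, ∃ ε > 0, x - ε ∈ S ∧ x + ε ∈ S := by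
    intro x hx
    obtain ⟨ε, hε, hb⟩ := Metric.isOpen_iff.mp hS x hx
    refine ⟨ε/2, by linarith, ?_, ?_⟩ <;>
      · apply hb
        rw [Metric.mem_ball, Real.dist_eq, abs_lt]
        constructor <;> linarith
  have hFpos : ∀ x ∈ S, 0 < cdfOf f x := by
    intro x hx
    obtain ⟨ε, hε, hl, _⟩ := hball x hx
    exact lt_of_le_of_lt (hge0 _) (hstrict hl hx (by linarith))
  have hFlt1 : ∀ x ∈ S, cdfOf f x < 1 := by
    intro x hx
    obtain ⟨ε, hε, _, hr⟩ := hball x hx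
    exact lt_of_lt_of_le (hstrict hx hr (by linarith)) (hle1 _)
  have hzero : ∀ y, (∀ z ∈ S, y < z) → cdfOf f y = 0 := by
    intro y hy
    exact setIntegral_eq_zero_of_forall_eq_zero fun t ht =>
      hfzero t fun hts => absurd (hy t hts) (not_lt.mpr ht)
  have hlt : ∀ x ∈ S, ∀ y, y < x → cdfOf f y < cdfOf f x := by
    intro x hx y hyx
    by_cases hyS : y ∈ S
    · exact hstrict hyS hx hyx
    · have h0 : cdfOf f y = 0 := by
        apply hzero
        intro z hz
        by_contra h
        push_neg at h
        exact hyS (hSconn.out hz hx ⟨h, hyx.le⟩)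
      rw [h0]; exact hFpos x hx
  have hqf : ∀ x ∈ S, qf (cdfOf f) (cdfOf f x) = x := by
    intro x hx
    unfold qf
    have hset : {y | cdfOf f x ≤ cdfOf f y} = Ici x := by
      ext y
      simp only [mem_setOf_eq, mem_Ici]
      constructor
      · intro h
        by_contra hc
        push_neg at hc
        exact absurd h (not_le.mpr (hlt x hx y hc))
      · exact fun h => hmono h
    rw [hset, csInf_Ici]
  refine ⟨hFderiv, hstrict, hqf, ?_⟩
  apply Subset.antisymm
  · rintro _ ⟨x, hx, rfl⟩
    exact ⟨hFpos x hx, hFlt1 x hx⟩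
  · intro u hu
    have htop : Tendsto (cdfOf f) atTop (𝓝 1) := by
      rw [← hfpdf]
      exact (aecover_Iic tendsto_id).integral_tendsto_of_countably_generated hfint
    have hIoi : Tendsto (fun y => ∫ x in Ioi y, f x) atBot (𝓝 1) := by
      rw [← hfpdf]
      exact (aecover_Ioi tendsto_id).integral_tendsto_of_countably_generated hfint
    have heq : ∀ y, cdfOf f y = 1 - ∫ x in Ioi y, f x := by
      intro y
      have h3 := intervalIntegral.integral_Iic_add_Ioi (b := y) hfint.integrableOn hfint.integrableOn
      rw [hfpdf] at h3
      unfold cdfOf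
      linarith
    have hbot : Tendsto (cdfOf f) atBot (𝓝 0) := by
      have h4 : Tendsto (fun y => 1 - ∫ x in Ioi y, f x) atBot (𝓝 (1 - 1)) :=
        tendsto_const_nhds.sub hIoi
      rw [sub_self] at h4
      exact h4.congr fun y => (heq y).symm
    obtain ⟨x₂, hx₂⟩ : ∃ x₂, u < cdfOf f x₂ := (htop.eventually (eventually_gt_nhds hu.2)).exists
    obtain ⟨x₁, hx₁⟩ : ∃ x₁, cdfOf f x₁ < u := (hbot.eventually (eventually_lt_nhds hu.1)).exists
    have hx12 : x₁ ≤ x₂ := by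
      by_contra h
      push_neg at h
      have := hmono h.le
      linarith
    obtain ⟨x, hxm, hxu⟩ := intermediate_value_Icc hx12 hFcont.continuousOn ⟨hx₁.le, hx₂.le⟩
    have h1 : ∃ s ∈ S, s ≤ x := by
      by_contra h
      push_neg at h
      have := hzero x h
      rw [this] at hxu
      linarith [hu.1]
    have h2 : ∃ s ∈ S, x ≤ s := by
      by_contra h
      push_neg at h
      have h5 : ∫ t in Ioi x, f t = 0 :=
        setIntegral_eq_zero_of_forall_eq_zero fun t ht =>
          hfzero t fun hts => absurd (h t hts) (not_lt.mpr ht.le)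
      have h3 := intervalIntegral.integral_Iic_add_Ioi (b := x) hfint.integrableOn hfint.integrableOn
      rw [hfpdf, h5] at h3
      have : cdfOf f x = 1 := by unfold cdfOf; linarith
      rw [this] at hxu
      linarith [hu.2]
    obtain ⟨s, hs, hsx⟩ := h1
    obtain ⟨s', hs', hxs'⟩ := h2
    exact ⟨x, hSconn.out hs hs' ⟨hsx, hxs'⟩, hxu⟩

lemma my_const_id (i n : ℕ) (hi1 : 1 ≤ i) (hin : i ≤ n) :
    ((n.factorial : ℝ) / (((i-1).factorial : ℝ) * ((n-i).factorial : ℝ)))^2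
      = (n : ℝ) * Cin i n *
        (((2*n-1).factorial : ℝ) / (((2*i-2).factorial : ℝ) * ((2*n-2*i).factorial : ℝ))) := by
  have k1 : (2*i-2).choose (i-1) * (i-1).factorial * (i-1).factorial = (2*i-2).factorial := by
    have h := Nat.choose_mul_factorial_mul_factorial (show i-1 ≤ 2*i-2 by omega)
    rwa [show 2*i-2-(i-1) = i-1 by omega] at h
  have k2 : (2*n-2*i).choose (n-i) * (n-i).factorial * (n-i).factorial = (2*n-2*i).factorial := by
    have h := Nat.choose_mul_factorial_mul_factorial (show n-i ≤ 2*n-2*i by omega)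
    rwa [show 2*n-2*i-(n-i) = n-i by omega] at h
  have k3 : (2*n-1).choose (n-1) * (n-1).factorial * n.factorial = (2*n-1).factorial := by
    have h := Nat.choose_mul_factorial_mul_factorial (show n-1 ≤ 2*n-1 by omega)
    rwa [show 2*n-1-(n-1) = n by omega] at h
  have k4 : n * (n-1).factorial = n.factorial := Nat.mul_factorial_pred (by omega)
  have c1 : ((2*i-2).choose (i-1) : ℝ) * ((i-1).factorial : ℝ) * ((i-1).factorial : ℝ)
      = ((2*i-2).factorial : ℝ) := by exact_mod_cast congrArg (Nat.cast (R := ℝ)) k1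
  have c2 : ((2*n-2*i).choose (n-i) : ℝ) * ((n-i).factorial : ℝ) * ((n-i).factorial : ℝ)
      = ((2*n-2*i).factorial : ℝ) := by exact_mod_cast congrArg (Nat.cast (R := ℝ)) k2
  have c3 : ((2*n-1).choose (n-1) : ℝ) * ((n-1).factorial : ℝ) * (n.factorial : ℝ)
      = ((2*n-1).factorial : ℝ) := by exact_mod_cast congrArg (Nat.cast (R := ℝ)) k3
  have c4 : (n : ℝ) * ((n-1).factorial : ℝ) = (n.factorial : ℝ) := by
    exact_mod_cast congrArg (Nat.cast (R := ℝ)) k4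
  have p1 : (0:ℝ) < ((i-1).factorial : ℝ) := by exact_mod_cast Nat.factorial_pos _
  have p2 : (0:ℝ) < ((n-i).factorial : ℝ) := by exact_mod_cast Nat.factorial_pos _
  have p3 : (0:ℝ) < (((2*n-1).choose (n-1)) : ℝ) := by
    exact_mod_cast Nat.choose_pos (show n-1 ≤ 2*n-1 by omega)
  have p4 : (0:ℝ) < (((2*i-2).choose (i-1)) : ℝ) := by
    exact_mod_cast Nat.choose_pos (show i-1 ≤ 2*i-2 by omega)
  have p5 : (0:ℝ) < (((2*n-2*i).choose (n-i)) : ℝ) := by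
    exact_mod_cast Nat.choose_pos (show n-i ≤ 2*n-2*i by omega)
  unfold Cin
  rw [← c1, ← c2, ← c3, ← c4]
  field_simp

lemma my_key
    (f w : ℝ → ℝ) (S : Set ℝ)
    (hS : IsOpen S) (hSconn : S.OrdConnected)
    (hfc : ContinuousOn f S) (hfpos : ∀ x ∈ S, 0 < f x) (hfzero : ∀ x ∉ S, f x = 0)
    (hfint : Integrable f) (hfpdf : ∫ x, f x = 1)
    (n i : ℕ) (hi1 : 1 ≤ i) (hin : i ≤ n) :
    ∫ x, w x * osPdf f (cdfOf f) i n x ^ 2 =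
      ((n : ℝ) * Cin i n) *
        ∫ u in (0:ℝ)..1, (w (qf (cdfOf f) u) * f (qf (cdfOf f) u)) * betaPdf i n u := by
  obtain ⟨hFderiv, hstrict, hqf, himage⟩ :=
    my_cdf_facts f S hS hSconn hfc hfpos hfzero hfint hfpdf
  set F : ℝ → ℝ := cdfOf f with hF
  set c : ℝ := (n.factorial : ℝ) / (((i-1).factorial : ℝ) * ((n-i).factorial : ℝ)) with hc
  set d : ℝ := ((2*n-1).factorial : ℝ) / (((2*i-2).factorial : ℝ) * ((2*n-2*i).factorial : ℝ))
    with hd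
  set G : ℝ → ℝ :=
    fun u => w (qf F u) * f (qf F u) * (u ^ (2*i-2) * (1-u) ^ (2*n-2*i)) with hG
  -- change of variables
  have hchg : ∫ u in Ioo (0:ℝ) 1, G u = ∫ x in S, |f x| • G (F x) := by
    rw [← himage]
    exact integral_image_eq_integral_abs_deriv_smul hS.measurableSet
      (fun x hx => (hFderiv x hx).hasDerivWithinAt) hstrict.injOn G
  -- pointwise identification on S
  have hpt : ∀ x ∈ S, |f x| • G (F x)
      = w x * f x ^ 2 * (F x ^ (2*i-2) * (1 - F x) ^ (2*n-2*i)) := by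
    intro x hx
    rw [hG]
    simp only [smul_eq_mul]
    rw [hqf x hx, abs_of_pos (hfpos x hx)]
    ring
  -- LHS restriction to S
  have hL1 : ∫ x, w x * osPdf f F i n x ^ 2 = ∫ x in S, w x * osPdf f F i n x ^ 2 :=
    (setIntegral_eq_integral_of_forall_compl_eq_zero fun x hx => by
      simp [osPdf, hfzero x hx]).symm
  have hL2 : ∀ x, w x * osPdf f F i n x ^ 2
      = c * c * (w x * f x ^ 2 * (F x ^ (2*i-2) * (1 - F x) ^ (2*n-2*i))) := by
    intro x
    unfold osPdf
    rw [show 2*i-2 = (i-1) + (i-1) by omega, show 2*n-2*i = (n-i)+(n-i) by omega,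
      pow_add, pow_add]
    ring
  -- RHS conversion
  have hR1 : ∫ u in (0:ℝ)..1, (w (qf F u) * f (qf F u)) * betaPdf i n u
      = d * ∫ u in Ioo (0:ℝ) 1, G u := by
    rw [intervalIntegral.integral_of_le zero_le_one, integral_Ioc_eq_integral_Ioo,
      ← integral_const_mul]
    apply integral_congr_ae
    filter_upwards with u
    unfold betaPdf
    rw [hG]
    ring
  calc ∫ x, w x * osPdf f F i n x ^ 2
      = ∫ x in S, w x * osPdf f F i n x ^ 2 := hL1
    _ = ∫ x in S, c * c * (w x * f x ^ 2 * (F x ^ (2*i-2) * (1 - F x) ^ (2*n-2*i))) := by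
        simp only [hL2]
    _ = c * c * ∫ x in S, w x * f x ^ 2 * (F x ^ (2*i-2) * (1 - F x) ^ (2*n-2*i)) :=
        integral_const_mul _ _
    _ = c * c * ∫ x in S, |f x| • G (F x) := by
        rw [setIntegral_congr_fun hS.measurableSet fun x hx => (hpt x hx).symm]
    _ = c * c * ∫ u in Ioo (0:ℝ) 1, G u := by rw [hchg]
    _ = ((n : ℝ) * Cin i n) *
        ∫ u in (0:ℝ)..1, (w (qf F u) * f (qf F u)) * betaPdf i n u := by
        rw [hR1]
        have := my_const_id i n hi1 hin
        rw [← hc, ← hd] at this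
        rw [show c * c = c ^ 2 by ring, this]
        ring

/-- GWE of the PRSS data for even sample size `n`. -/
theorem Jprss_eq_of_even
    (f w : ℝ → ℝ) (S : Set ℝ)
    (hS : IsOpen S) (hSconn : S.OrdConnected)
    (hfc : ContinuousOn f S) (hfpos : ∀ x ∈ S, 0 < f x) (hfzero : ∀ x ∉ S, f x = 0)
    (hfint : Integrable f) (hfpdf : ∫ x, f x = 1)
    (hw : Measurable w) (hwnn : ∀ x, 0 ≤ w x)
    (hwf : Integrable (fun x => w x * f x ^ 2))
    (n a b : ℕ) (hn : 2 ≤ n) (hne : Even n)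
    (ha1 : 1 ≤ a) (han : a ≤ n) (hb1 : 1 ≤ b) (hbn : b ≤ n) :
    Jprss w f (cdfOf f) n a b =
      -(((n : ℝ) ^ n * Cin a n ^ (n / 2) * Cin b n ^ (n / 2)) / 2) *
        (∫ u in (0:ℝ)..1,
            (w (qf (cdfOf f) u) * f (qf (cdfOf f) u)) * betaPdf a n u) ^ (n / 2) *
        (∫ u in (0:ℝ)..1,
            (w (qf (cdfOf f) u) * f (qf (cdfOf f) u)) * betaPdf b n u) ^ (n / 2) := by
  
  unfold Jprss
  rw [if_pos hne]
  rw [my_key f w S hS hSconn hfc hfpos hfzero hfint hfpdf n a ha1 han,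
      my_key f w S hS hSconn hfc hfpos hfzero hfint hfpdf n b hb1 hbn]
  obtain ⟨m, rfl⟩ := hne
  simp only [show (m + m) / 2 = m from by omega]
  rw [show ((m + m : ℕ) : ℝ) ^ (m + m) = ((m + m : ℕ) : ℝ) ^ m * ((m + m : ℕ) : ℝ) ^ m from
    pow_add _ m m]
  ring
end

section
/- Let f be a pdf that is continuous and strictly positive on an open interval S and zero outside S, with cdf F, and let w : ℝ → [0,∞) be measurable with ∫ w(x) f(x)^2 dx < ∞. Let n ≥ 3 be odd and let a, b be integers with 1 ≤ a, b ≤ n. Then J^w(X_PRSS^(n)) = -(Q_{2,n}/2) · (∫_0^1 Λ_X^w(u) φ_{2a-1:2n-1}(u) du)^{(n-1)/2} · (∫_0^1 Λ_X^w(u) φ_{2b-1:2n-1}(u) du)^{(n-1)/2} · (∫_0^1 Λ_X^w(u) φ_{n:2n-1}(u) du), where Q_{2,n} = n^{n+1} · C_{a,n}^{(n-1)/2} · C_{b,n}^{(n-1)/2} · ((n-1)!)^4 / ((((n-1)/2)!)^4 (2n-1)!) and φ_{n:2n-1}(u) = ((2n-1)!/(((n-1)!)^2)) u^{n-1}(1-u)^{n-1}.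 -/
open MeasureTheory Real Set

section AuxCov

open Filter Topology

lemma key_cov (f : ℝ → ℝ) (S : Set ℝ)
    (hS : IsOpen S) (hSconn : S.OrdConnected)
    (hfc : ContinuousOn f S) (hfpos : ∀ x ∈ S, 0 < f x) (hfzero : ∀ x ∉ S, f x = 0)
    (hfint : Integrable f) (hfpdf : ∫ x, f x = 1)
    (w : ℝ → ℝ) (p q : ℕ) :
    ∫ x, w x * cdfOf f x ^ p * (1 - cdfOf f x) ^ q * f x ^ 2 =
      ∫ u in (0:ℝ)..1,
        (w (qf (cdfOf f) u) * f (qf (cdfOf f) u)) * (u ^ p * (1 - u) ^ q) := by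
  set F := cdfOf f with hF
  have hfnn : ∀ x, 0 ≤ f x := by
    intro x; by_cases hx : x ∈ S
    · exact (hfpos x hx).le
    · rw [hfzero x hx]
  have hIint : ∀ x : ℝ, IntegrableOn f (Iic x) := fun x => hfint.integrableOn
  have hII : ∀ a b : ℝ, IntervalIntegrable f volume a b := fun a b =>
    hfint.intervalIntegrable
  have hFsub : ∀ x y : ℝ, F y - F x = ∫ t in x..y, f t := fun x y =>
    intervalIntegral.integral_Iic_sub_Iic (hIint x) (hIint y)
  have hFmono : Monotone F := by
    intro x y hxy
    have h := hFsub x y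
    have h2 : 0 ≤ ∫ t in x..y, f t :=
      intervalIntegral.integral_nonneg hxy (fun t _ => hfnn t)
    linarith
  have hFeq : F = fun y => F 0 + ∫ t in (0:ℝ)..y, f t := by
    funext y; have := hFsub 0 y; linarith
  have hFcont : Continuous F := by
    rw [hFeq]
    exact continuous_const.add (intervalIntegral.continuous_primitive hII 0)
  have hFderiv : ∀ x ∈ S, HasDerivAt F (f x) x := by
    intro x hx
    rw [hFeq]
    exact HasDerivAt.const_add (F 0)
      (intervalIntegral.integral_hasDerivAt_right (hII 0 x)
        hfint.aestronglyMeasurable.stronglyMeasurableAtFilter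
        (hfc.continuousAt (hS.mem_nhds hx)))
  have hstrict : StrictMonoOn F S := by
    intro x hx y hy hxy
    have hpos : 0 < ∫ t in x..y, f t := by
      refine intervalIntegral.intervalIntegral_pos_of_pos_on (hII x y) (fun t ht => hfpos t ?_) hxy
      exact hSconn.out hx hy ⟨ht.1.le, ht.2.le⟩
    have := hFsub x y; linarith
  have hFnn : ∀ x, 0 ≤ F x := fun x =>
    setIntegral_nonneg measurableSet_Iic fun t _ => hfnn t
  have hFle1 : ∀ x, F x ≤ 1 := by
    intro x
    calc F x ≤ ∫ t, f t := setIntegral_le_integral hfint (ae_of_all _ hfnn)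
    _ = 1 := hfpdf
  have hball : ∀ x ∈ S, ∃ δ > 0, Ioo (x - δ) (x + δ) ⊆ S := by
    intro x hx
    obtain ⟨δ, hδ, hb⟩ := Metric.isOpen_iff.1 hS x hx
    exact ⟨δ, hδ, by rwa [← Real.ball_eq_Ioo]⟩
  have hFposS : ∀ x ∈ S, 0 < F x := by
    intro x hx
    obtain ⟨δ, hδ, hb⟩ := hball x hx
    have h1 : 0 < ∫ t in (x - δ/2)..x, f t := by
      refine intervalIntegral.intervalIntegral_pos_of_pos_on (hII _ _) (fun t ht => hfpos t (hb ?_)) (by linarith)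
      exact ⟨by linarith [ht.1], by linarith [ht.2]⟩
    have h2 := hFsub (x - δ/2) x
    have h3 := hFnn (x - δ/2)
    linarith
  have hFlt1S : ∀ x ∈ S, F x < 1 := by
    intro x hx
    obtain ⟨δ, hδ, hb⟩ := hball x hx
    have h1 : 0 < ∫ t in x..(x + δ/2), f t := by
      refine intervalIntegral.intervalIntegral_pos_of_pos_on (hII _ _) (fun t ht => hfpos t (hb ?_)) (by linarith)
      exact ⟨by linarith [ht.1], by linarith [ht.2]⟩
    have h2 := hFsub x (x + δ/2)
    have h3 := hFle1 (x + δ/2)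
    linarith
  have hlow : ∀ x ∈ S, ∀ y, y < x → F y < F x := by
    intro x hx y hxy
    by_cases hy : y ∈ S
    · exact hstrict hy hx hxy
    · obtain ⟨δ, hδ, hb⟩ := hball x hx
      have hyle : y ≤ x - δ := by
        by_contra h
        exact hy (hb ⟨by linarith, by linarith⟩)
      have hmem : x - δ/2 ∈ S := hb ⟨by linarith, by linarith⟩
      calc F y ≤ F (x - δ/2) := hFmono (by linarith)
      _ < F x := hstrict hmem hx (by linarith)
  have hqf : ∀ x ∈ S, qf F (F x) = x := by
    intro x hx
    have hmem : x ∈ {y | F x ≤ F y} := le_refl (F x)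
    have hlb : ∀ y ∈ {y | F x ≤ F y}, x ≤ y := by
      intro y hy
      by_contra h
      exact absurd hy (not_le.mpr (hlow x hx y (not_le.mp h)))
    exact le_antisymm (csInf_le ⟨x, hlb⟩ hmem) (le_csInf ⟨x, hmem⟩ hlb)
  have hFbot : Tendsto F atBot (𝓝 0) := by
    have h := intervalIntegral_tendsto_integral_Iic 0 (hIint 0) (tendsto_id (α := ℝ))
    have h2 : Tendsto (fun y : ℝ => F 0 - ∫ t in y..(0:ℝ), f t) atBot (𝓝 (F 0 - F 0)) :=
      tendsto_const_nhds.sub h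
    have h3 : (fun y : ℝ => F 0 - ∫ t in y..(0:ℝ), f t) = F := by
      funext y; have := hFsub y 0; linarith
    rw [h3, sub_self] at h2
    exact h2
  have hFtop : Tendsto F atTop (𝓝 1) := by
    have h := intervalIntegral_tendsto_integral_Ioi 0 hfint.integrableOn (tendsto_id (α := ℝ))
    have heq : F 0 + ∫ t in Ioi (0:ℝ), f t = 1 := by
      rw [← hfpdf]; exact intervalIntegral.integral_Iic_add_Ioi (hIint 0) hfint.integrableOn
    have h2 : Tendsto (fun y : ℝ => F 0 + ∫ t in (0:ℝ)..y, f t) atTop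
        (𝓝 (F 0 + ∫ t in Ioi (0:ℝ), f t)) := tendsto_const_nhds.add h
    rw [heq] at h2
    rw [hFeq]
    exact h2
  have himg : F '' S = Ioo 0 1 := by
    apply Subset.antisymm
    · rintro _ ⟨x, hx, rfl⟩
      exact ⟨hFposS x hx, hFlt1S x hx⟩
    · rintro u ⟨hu0, hu1⟩
      obtain ⟨x₁, hx₁⟩ := (hFbot.eventually_lt_const hu0).exists
      obtain ⟨x₂, hx₂⟩ := ((hFtop.eventually_const_lt hu1).and (eventually_ge_atTop x₁)).exists
      have hx12 : x₁ ≤ x₂ := hx₂.2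
      have hu : u ∈ Icc (F x₁) (F x₂) := ⟨hx₁.le, hx₂.1.le⟩
      obtain ⟨x, hxmem, hxu⟩ := intermediate_value_Icc hx12 hFcont.continuousOn hu
      refine ⟨x, ?_, hxu⟩
      by_contra hxS
      by_cases h1 : ∃ s ∈ S, s < x
      · by_cases h2 : ∃ s ∈ S, x < s
        · obtain ⟨s₁, hs₁, hs₁x⟩ := h1
          obtain ⟨s₂, hs₂, hxs₂⟩ := h2
          exact hxS (hSconn.out hs₁ hs₂ ⟨hs₁x.le, hxs₂.le⟩)
        · push_neg at h2
          have hzero : ∀ t ∈ Ioi x, f t = 0 := by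
            intro t ht
            refine hfzero t fun hts => ?_
            exact absurd (h2 t hts) (not_le.mpr ht)
          have hz : (∫ t in Ioi x, f t) = 0 := setIntegral_eq_zero_of_forall_eq_zero hzero
          have h3 : F x + ∫ t in Ioi x, f t = 1 := by
            rw [← hfpdf]; exact intervalIntegral.integral_Iic_add_Ioi (hIint x) hfint.integrableOn
          rw [hz, add_zero, hxu] at h3
          exact absurd h3 hu1.ne
      · push_neg at h1
        have hzero : ∀ t ∈ Iic x, f t = 0 := by
          intro t ht
          refine hfzero t fun hts => ?_
          have h2 := h1 t hts
          have htx : t = x := le_antisymm ht h2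
          exact hxS (htx ▸ hts)
        have h0 : F x = 0 := setIntegral_eq_zero_of_forall_eq_zero hzero
        rw [hxu] at h0
        exact absurd h0 hu0.ne'
  have hind : (fun x => w x * F x ^ p * (1 - F x) ^ q * f x ^ 2)
      = S.indicator (fun x => w x * F x ^ p * (1 - F x) ^ q * f x ^ 2) := by
    funext x
    by_cases hx : x ∈ S
    · rw [indicator_of_mem hx]
    · rw [indicator_of_notMem hx, hfzero x hx]; ring
  rw [hind, integral_indicator hS.measurableSet]
  have hcov := integral_image_eq_integral_abs_deriv_smul hS.measurableSet
    (fun x hx => (hFderiv x hx).hasDerivWithinAt) hstrict.injOn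
    (fun u => (w (qf F u) * f (qf F u)) * (u ^ p * (1 - u) ^ q))
  rw [himg] at hcov
  rw [intervalIntegral.integral_of_le zero_le_one, integral_Ioc_eq_integral_Ioo, hcov]
  refine setIntegral_congr_fun hS.measurableSet fun x hx => ?_
  simp only [smul_eq_mul, hqf x hx, abs_of_nonneg (hfnn x)]
  ring

end AuxCov

/-- GWE of the PRSS data for odd sample size `n ≥ 3`. -/
theorem Jprss_eq_of_odd
    (f w : ℝ → ℝ) (S : Set ℝ)
    (hS : IsOpen S) (hSconn : S.OrdConnected)
    (hfc : ContinuousOn f S) (hfpos : ∀ x ∈ S, 0 < f x) (hfzero : ∀ x ∉ S, f x = 0)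
    (hfint : Integrable f) (hfpdf : ∫ x, f x = 1)
    (hw : Measurable w) (hwnn : ∀ x, 0 ≤ w x)
    (hwf : Integrable (fun x => w x * f x ^ 2))
    (n a b : ℕ) (hn : 3 ≤ n) (hno : Odd n)
    (ha1 : 1 ≤ a) (han : a ≤ n) (hb1 : 1 ≤ b) (hbn : b ≤ n) :
    Jprss w f (cdfOf f) n a b =
      -(((n : ℝ) ^ (n + 1) * Cin a n ^ ((n - 1) / 2) * Cin b n ^ ((n - 1) / 2) *
            (Nat.factorial (n - 1) : ℝ) ^ 4 /
            ((Nat.factorial ((n - 1) / 2) : ℝ) ^ 4 * (Nat.factorial (2 * n - 1) : ℝ))) / 2) *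
        (∫ u in (0:ℝ)..1,
            (w (qf (cdfOf f) u) * f (qf (cdfOf f) u)) * betaPdf a n u) ^ ((n - 1) / 2) *
        (∫ u in (0:ℝ)..1,
            (w (qf (cdfOf f) u) * f (qf (cdfOf f) u)) * betaPdf b n u) ^ ((n - 1) / 2) *
        (∫ u in (0:ℝ)..1,
            (w (qf (cdfOf f) u) * f (qf (cdfOf f) u)) *
              (((Nat.factorial (2 * n - 1) : ℝ) / (Nat.factorial (n - 1) : ℝ) ^ 2) *
                u ^ (n - 1) * (1 - u) ^ (n - 1))) := by
  obtain ⟨k, hk⟩ := hno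
  have hk1 : 1 ≤ k := by omega
  set F := cdfOf f with hF
  have hnotE : ¬ Even n := by
    subst hk; simp [Nat.even_add_one, parity_simps]
  -- the transformed LHS integrals
  have hkey : ∀ i : ℕ,
      (∫ x, w x * osPdf f F i n x ^ 2)
        = ((n.factorial : ℝ) / ((i-1).factorial * (n-i).factorial))^2 *
          ∫ u in (0:ℝ)..1,
            (w (qf F u) * f (qf F u)) * (u ^ (2*(i-1)) * (1-u) ^ (2*(n-i))) := by
    intro i
    rw [← key_cov f S hS hSconn hfc hfpos hfzero hfint hfpdf w (2*(i-1)) (2*(n-i)),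
        ← integral_const_mul]
    congr 1; funext x
    simp only [osPdf]
    ring
  -- the transformed RHS beta integrals
  have hbeta : ∀ i : ℕ,
      (∫ u in (0:ℝ)..1, (w (qf F u) * f (qf F u)) * betaPdf i n u)
        = (((2*n-1).factorial : ℝ) / ((2*i-2).factorial * (2*n-2*i).factorial)) *
          ∫ u in (0:ℝ)..1,
            (w (qf F u) * f (qf F u)) * (u ^ (2*(i-1)) * (1-u) ^ (2*(n-i))) := by
    intro i
    rw [← intervalIntegral.integral_const_mul]
    congr 1; funext u
    have e1 : 2*i-2 = 2*(i-1) := by omega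
    have e2 : 2*n-2*i = 2*(n-i) := by omega
    simp only [betaPdf, e1, e2]
    ring
  have hmid : (∫ u in (0:ℝ)..1, (w (qf F u) * f (qf F u)) *
        (((Nat.factorial (2 * n - 1) : ℝ) / (Nat.factorial (n - 1) : ℝ) ^ 2) *
          u ^ (n - 1) * (1 - u) ^ (n - 1)))
      = (((2*n-1).factorial : ℝ) / ((n-1).factorial : ℝ)^2) *
        ∫ u in (0:ℝ)..1,
          (w (qf F u) * f (qf F u)) * (u ^ (2*((k+1)-1)) * (1-u) ^ (2*(n-(k+1)))) := by
    rw [← intervalIntegral.integral_const_mul]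
    congr 1; funext u
    have e1 : 2*((k+1)-1) = n - 1 := by omega
    have e2 : 2*(n-(k+1)) = n - 1 := by omega
    rw [e1, e2]; ring
  -- factorial/choose identity
  have hCin : ∀ i : ℕ, 1 ≤ i → i ≤ n →
      ((n.factorial : ℝ) / ((i-1).factorial * (n-i).factorial))^2
        = (n : ℝ) * Cin i n *
          (((2*n-1).factorial : ℝ) / ((2*i-2).factorial * (2*n-2*i).factorial)) := by
    intro i h1 h2
    have hn' : ((n.factorial : ℕ) : ℝ) = (n : ℝ) * ((n-1).factorial : ℝ) := by
      rw [← Nat.cast_mul, Nat.mul_factorial_pred (by omega)]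
    rw [Cin, Nat.cast_choose ℝ (by omega : i-1 ≤ 2*i-2),
        Nat.cast_choose ℝ (by omega : n-i ≤ 2*n-2*i),
        Nat.cast_choose ℝ (by omega : n-1 ≤ 2*n-1),
        show 2*i-2-(i-1) = i-1 from by omega,
        show 2*n-2*i-(n-i) = n-i from by omega,
        show 2*n-1-(n-1) = n from by omega, hn']
    have f1 : ((i-1).factorial : ℝ) ≠ 0 := Nat.cast_ne_zero.mpr (Nat.factorial_ne_zero _)
    have f2 : ((n-i).factorial : ℝ) ≠ 0 := Nat.cast_ne_zero.mpr (Nat.factorial_ne_zero _)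
    have f3 : ((2*i-2).factorial : ℝ) ≠ 0 := Nat.cast_ne_zero.mpr (Nat.factorial_ne_zero _)
    have f4 : ((2*n-2*i).factorial : ℝ) ≠ 0 := Nat.cast_ne_zero.mpr (Nat.factorial_ne_zero _)
    have f5 : ((2*n-1).factorial : ℝ) ≠ 0 := Nat.cast_ne_zero.mpr (Nat.factorial_ne_zero _)
    have f6 : ((n-1).factorial : ℝ) ≠ 0 := Nat.cast_ne_zero.mpr (Nat.factorial_ne_zero _)
    have f7 : (n : ℝ) ≠ 0 := by positivity
    field_simp
  -- unfold Jprss and rewrite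
  rw [Jprss, if_neg hnotE, hkey a, hkey b, hkey ((n+1)/2),
      show (n+1)/2 = k+1 from by omega, show (n-1)/2 = k from by omega,
      hbeta a, hbeta b, hmid, hCin a ha1 han, hCin b hb1 hbn]
  simp only [show k+1-1 = k from rfl, show n-(k+1) = k from by omega]
  have hmidc : ((n.factorial : ℝ) / ((k).factorial * (k).factorial))^2
      = (n:ℝ)^2 * ((n-1).factorial:ℝ)^4 / (((k).factorial:ℝ)^4 * ((2*n-1).factorial:ℝ))
        * (((2*n-1).factorial : ℝ) / ((n-1).factorial : ℝ)^2) := by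
    have hn' : ((n.factorial : ℕ) : ℝ) = (n : ℝ) * ((n-1).factorial : ℝ) := by
      rw [← Nat.cast_mul, Nat.mul_factorial_pred (by omega)]
    have f5 : ((2*n-1).factorial : ℝ) ≠ 0 := Nat.cast_ne_zero.mpr (Nat.factorial_ne_zero _)
    have f6 : ((n-1).factorial : ℝ) ≠ 0 := Nat.cast_ne_zero.mpr (Nat.factorial_ne_zero _)
    have f8 : ((k).factorial : ℝ) ≠ 0 := Nat.cast_ne_zero.mpr (Nat.factorial_ne_zero _)
    rw [hn']
    field_simp
  rw [hmidc]
  have hnpow : (n:ℝ) ^ (n+1) = (n:ℝ)^(2*k+2) := by rw [hk]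
  rw [hnpow]
  ring
end

section
/- Let X be a nonnegative random variable with pdf f continuous and strictly positive on (0,∞), with cdf F. Let η : [0,∞) → [0,∞) be continuously differentiable and strictly increasing with η(0) = 0, η'(x) > 0 for x > 0, and η(x) → ∞ as x → ∞, and let V = η(X), whose pdf is g(v) = f(η^{-1}(v))/η'(η^{-1}(v)). Let w₁ : [0,∞) → [0,∞) be measurable with w₁(η(x)) ≤ η'(x) w₁(x) for all x ≥ 0, and assume ∫ w₁(x) f(x)^2 dx < ∞. Then for every integer n ≥ 1 and rank parameters a, b with 1 ≤ a, b ≤ n, J^{w₁}(X_PRSS^(n)) ≤ J^{w₁}(V_PRSS^(n)). -/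
open MeasureTheory Real Set

/-- if `η` is an increasing transformation with `w₁(η(x)) ≤ η'(x) w₁(x)`,
then the GWE of the PRSS data of `X` is at most that of `V = η(X)`. -/
theorem Jprss_le_of_transform
    (f g η η' ηinv w₁ : ℝ → ℝ)
    (hfc : ContinuousOn f (Ioi (0:ℝ))) (hfpos : ∀ x ∈ Ioi (0:ℝ), 0 < f x)
    (hfzero : ∀ x ∉ Ioi (0:ℝ), f x = 0)
    (hfint : Integrable f) (hfpdf : ∫ x, f x = 1)
    (hηd : ∀ x ∈ Ici (0:ℝ), HasDerivAt η (η' x) x) (hη'c : ContinuousOn η' (Ici (0:ℝ)))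
    (hηmono : StrictMonoOn η (Ici (0:ℝ))) (hη0 : η 0 = 0)
    (hη'pos : ∀ x > (0:ℝ), 0 < η' x)
    (hηtop : Filter.Tendsto η Filter.atTop Filter.atTop)
    (hinv1 : ∀ x ≥ (0:ℝ), ηinv (η x) = x) (hinv2 : ∀ v ≥ (0:ℝ), η (ηinv v) = v)
    (hg : ∀ v > (0:ℝ), g v = f (ηinv v) / η' (ηinv v)) (hgzero : ∀ v ≤ (0:ℝ), g v = 0)
    (hw : Measurable w₁) (hwnn : ∀ x ≥ (0:ℝ), 0 ≤ w₁ x)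
    (hwη : ∀ x ≥ (0:ℝ), w₁ (η x) ≤ η' x * w₁ x)
    (hint : Integrable (fun x => w₁ x * f x ^ 2)) :
    ∀ n : ℕ, 1 ≤ n → ∀ a b : ℕ, 1 ≤ a → a ≤ n → 1 ≤ b → b ≤ n →
      Jprss w₁ f (cdfOf f) n a b ≤ Jprss w₁ g (cdfOf g) n a b := by
  -- basic facts about f and its cdf
  have hf0 : ∀ x : ℝ, x ≤ 0 → f x = 0 := fun x hx =>
    hfzero x (by simp only [mem_Ioi, not_lt]; exact hx)
  have hfnn : ∀ x, 0 ≤ f x := by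
    intro x
    rcases le_or_gt x 0 with h | h
    · rw [hf0 x h]
    · exact (hfpos x h).le
  have hFmono : Monotone (cdfOf f) := by
    intro x y hxy
    exact setIntegral_mono_set hfint.integrableOn (ae_of_all _ hfnn)
      (HasSubset.Subset.eventuallyLE (Iic_subset_Iic.2 hxy))
  have hFmeas : Measurable (cdfOf f) := hFmono.measurable
  have hFnn : ∀ x, 0 ≤ cdfOf f x := fun x =>
    setIntegral_nonneg measurableSet_Iic (fun t _ => hfnn t)
  have hFle1 : ∀ x, cdfOf f x ≤ 1 := by
    intro x
    calc cdfOf f x ≤ ∫ t, f t := setIntegral_le_integral hfint (ae_of_all _ hfnn)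
      _ = 1 := hfpdf
  -- facts about η
  have hηcont : ContinuousOn η (Ici 0) := fun x hx =>
    (hηd x hx).continuousAt.continuousWithinAt
  have hηpos : ∀ x > (0:ℝ), 0 < η x := by
    intro x hx
    have h := hηmono self_mem_Ici (le_of_lt hx : x ∈ Ici (0:ℝ)) hx
    rwa [hη0] at h
  have hsurj : ∀ y : ℝ, 0 < y → ∃ t, 0 ≤ t ∧ η t = y := by
    intro y hy
    obtain ⟨M, hM1, hM2⟩ :=
      ((hηtop.eventually_ge_atTop y).and (Filter.eventually_ge_atTop (0:ℝ))).exists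
    have h := intermediate_value_Icc hM2 (hηcont.mono Icc_subset_Ici_self)
    have hymem : y ∈ Icc (η 0) (η M) := ⟨by rw [hη0]; exact hy.le, hM1⟩
    obtain ⟨t, ht, hty⟩ := h hymem
    exact ⟨t, ht.1, hty⟩
  have himg_Ioi : η '' Ioi 0 = Ioi 0 := by
    apply Subset.antisymm
    · rintro _ ⟨x, hx, rfl⟩
      exact hηpos x hx
    · intro y hy
      obtain ⟨t, ht0, hty⟩ := hsurj y hy
      have htne : t ≠ 0 := by
        rintro rfl
        rw [hη0] at hty
        rw [← hty] at hy
        exact lt_irrefl _ (mem_Ioi.1 hy)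
      exact ⟨t, lt_of_le_of_ne ht0 (Ne.symm htne), hty⟩
  have himg_Ioc : ∀ x > (0:ℝ), η '' Ioc 0 x = Ioc 0 (η x) := by
    intro x hx
    apply Subset.antisymm
    · rintro _ ⟨t, ⟨ht0, htx⟩, rfl⟩
      exact ⟨hηpos t ht0, hηmono.monotoneOn ht0.le hx.le htx⟩
    · intro y hy
      obtain ⟨t, ht0, hty⟩ := hsurj y hy.1
      have htne : t ≠ 0 := by
        rintro rfl
        rw [hη0] at hty
        have hy1 := hy.1
        rw [← hty] at hy1
        exact lt_irrefl _ hy1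
      have htx : t ≤ x := by
        have h : η t ≤ η x := by rw [hty]; exact hy.2
        exact (hηmono.le_iff_le ht0 hx.le).1 h
      exact ⟨t, ⟨lt_of_le_of_ne ht0 (Ne.symm htne), htx⟩, hty⟩
  have hgη : ∀ x > (0:ℝ), g (η x) = f x / η' x := by
    intro x hx
    rw [hg (η x) (hηpos x hx), hinv1 x hx.le]
  -- indicator representations of the cdfs over (0,∞)
  have hFIoc : ∀ x, cdfOf f x = ∫ t in Ioc 0 x, f t := by
    intro x
    show (∫ t in Iic x, f t) = _
    calc (∫ t in Iic x, f t) = ∫ t in Iic x, (Ioi (0:ℝ)).indicator f t := by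
          apply setIntegral_congr_fun measurableSet_Iic
          intro t _
          by_cases h : t ∈ Ioi (0:ℝ)
          · rw [indicator_of_mem h]
          · rw [indicator_of_notMem h, hfzero t h]
      _ = ∫ t in Iic x ∩ Ioi 0, f t := setIntegral_indicator measurableSet_Ioi
      _ = ∫ t in Ioc 0 x, f t := by rw [inter_comm, Ioi_inter_Iic]
  have hGIoc : ∀ x, cdfOf g x = ∫ t in Ioc 0 x, g t := by
    intro x
    show (∫ t in Iic x, g t) = _
    calc (∫ t in Iic x, g t) = ∫ t in Iic x, (Ioi (0:ℝ)).indicator g t := by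
          apply setIntegral_congr_fun measurableSet_Iic
          intro t _
          by_cases h : t ∈ Ioi (0:ℝ)
          · rw [indicator_of_mem h]
          · rw [indicator_of_notMem h, hgzero t (by simpa [mem_Ioi, not_lt] using h)]
      _ = ∫ t in Iic x ∩ Ioi 0, g t := setIntegral_indicator measurableSet_Ioi
      _ = ∫ t in Ioc 0 x, g t := by rw [inter_comm, Ioi_inter_Iic]
  -- G ∘ η = F on (0,∞)
  have hGF : ∀ x > (0:ℝ), cdfOf g (η x) = cdfOf f x := by
    intro x hx
    rw [hGIoc, hFIoc, ← himg_Ioc x hx,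
      integral_image_eq_integral_abs_deriv_smul measurableSet_Ioc
        (fun t ht => (hηd t (le_of_lt ht.1)).hasDerivWithinAt)
        (hηmono.injOn.mono (fun t ht => le_of_lt ht.1)) g]
    apply setIntegral_congr_fun measurableSet_Ioc
    intro t ht
    have ht0 : 0 < t := ht.1
    have hη't := hη'pos t ht0
    show |η' t| • g (η t) = f t
    rw [smul_eq_mul, hgη t ht0, abs_of_pos hη't]
    field_simp
  -- pointwise facts on osPdf
  have hosnn : ∀ i m : ℕ, ∀ x, 0 ≤ osPdf f (cdfOf f) i m x := by
    intro i m x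
    unfold osPdf
    have h1 : (0:ℝ) ≤ (Nat.factorial m : ℝ) /
        ((Nat.factorial (i - 1) : ℝ) * (Nat.factorial (m - i) : ℝ)) := by positivity
    exact mul_nonneg (mul_nonneg (mul_nonneg h1 (pow_nonneg (hFnn x) _))
      (pow_nonneg (by linarith [hFle1 x]) _)) (hfnn x)
  have hosle : ∀ i m : ℕ, ∀ x, osPdf f (cdfOf f) i m x ≤
      ((Nat.factorial m : ℝ) /
        ((Nat.factorial (i - 1) : ℝ) * (Nat.factorial (m - i) : ℝ))) * f x := by
    intro i m x
    unfold osPdf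
    set c : ℝ := (Nat.factorial m : ℝ) /
        ((Nat.factorial (i - 1) : ℝ) * (Nat.factorial (m - i) : ℝ)) with hcdef
    have hc : (0:ℝ) ≤ c := by rw [hcdef]; positivity
    have hF := hFnn x
    have hF1 := hFle1 x
    have h1 : cdfOf f x ^ (i - 1) ≤ 1 := pow_le_one₀ hF hF1
    have h2 : (1 - cdfOf f x) ^ (m - i) ≤ 1 := pow_le_one₀ (by linarith) (by linarith)
    have h3 : cdfOf f x ^ (i - 1) * (1 - cdfOf f x) ^ (m - i) ≤ 1 :=
      le_trans (mul_le_of_le_one_right (pow_nonneg hF _) h2) h1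
    calc c * cdfOf f x ^ (i - 1) * (1 - cdfOf f x) ^ (m - i) * f x
        = (c * f x) * (cdfOf f x ^ (i - 1) * (1 - cdfOf f x) ^ (m - i)) := by ring
      _ ≤ (c * f x) * 1 := mul_le_mul_of_nonneg_left h3 (mul_nonneg hc (hfnn x))
      _ = c * f x := mul_one _
  have hφnn_f : ∀ i m : ℕ, ∀ x, 0 ≤ w₁ x * osPdf f (cdfOf f) i m x ^ 2 := by
    intro i m x
    rcases le_or_gt x 0 with h | h
    · simp [osPdf, hf0 x h]
    · exact mul_nonneg (hwnn x h.le) (sq_nonneg _)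
  have hφnn_g : ∀ i m : ℕ, ∀ v, 0 ≤ w₁ v * osPdf g (cdfOf g) i m v ^ 2 := by
    intro i m v
    rcases le_or_gt v 0 with h | h
    · simp [osPdf, hgzero v h]
    · exact mul_nonneg (hwnn v h.le) (sq_nonneg _)
  have hosmeas : ∀ i m : ℕ, AEStronglyMeasurable (fun x => osPdf f (cdfOf f) i m x) volume := by
    intro i m
    unfold osPdf
    have m1 : Measurable (fun x =>
        ((Nat.factorial m : ℝ) / ((Nat.factorial (i - 1) : ℝ) * (Nat.factorial (m - i) : ℝ))) *
          cdfOf f x ^ (i - 1) * (1 - cdfOf f x) ^ (m - i)) :=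
      (measurable_const.mul (hFmeas.pow_const _)).mul ((measurable_const.sub hFmeas).pow_const _)
    exact m1.aestronglyMeasurable.mul hfint.1
  have hos2meas : ∀ i m : ℕ,
      AEStronglyMeasurable (fun x => osPdf f (cdfOf f) i m x ^ 2) volume := by
    intro i m
    exact (hosmeas i m).pow 2
  have hφint : ∀ i m : ℕ, Integrable (fun x => w₁ x * osPdf f (cdfOf f) i m x ^ 2) := by
    intro i m
    set c : ℝ := (Nat.factorial m : ℝ) /
        ((Nat.factorial (i - 1) : ℝ) * (Nat.factorial (m - i) : ℝ)) with hcdef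
    apply Integrable.mono (hint.const_mul (c ^ 2))
    · exact hw.aestronglyMeasurable.mul (hos2meas i m)
    · apply ae_of_all
      intro x
      rcases le_or_gt x 0 with h | h
      · have hfx : f x = 0 := hf0 x h
        simp [osPdf, hfx]
      · have h1 := hosnn i m x
        have h2 := hosle i m x
        have h3 : osPdf f (cdfOf f) i m x ^ 2 ≤ (c * f x) ^ 2 := pow_le_pow_left₀ h1 h2 2
        rw [Real.norm_eq_abs, Real.norm_eq_abs, abs_of_nonneg (hφnn_f i m x)]
        calc w₁ x * osPdf f (cdfOf f) i m x ^ 2 ≤ w₁ x * (c * f x) ^ 2 :=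
              mul_le_mul_of_nonneg_left h3 (hwnn x h.le)
          _ = c ^ 2 * (w₁ x * f x ^ 2) := by ring
          _ ≤ |c ^ 2 * (w₁ x * f x ^ 2)| := le_abs_self _
  -- the key comparison for each rank
  have key : ∀ i m : ℕ, (∫ v, w₁ v * osPdf g (cdfOf g) i m v ^ 2) ≤
      ∫ x, w₁ x * osPdf f (cdfOf f) i m x ^ 2 := by
    intro i m
    have step1 : (∫ v, w₁ v * osPdf g (cdfOf g) i m v ^ 2)
        = ∫ v in Ioi 0, w₁ v * osPdf g (cdfOf g) i m v ^ 2 := by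
      rw [← integral_indicator measurableSet_Ioi]
      congr 1
      funext v
      by_cases h : v ∈ Ioi (0:ℝ)
      · rw [indicator_of_mem h]
      · rw [indicator_of_notMem h]
        have hgv : g v = 0 := hgzero v (by simpa [mem_Ioi, not_lt] using h)
        simp [osPdf, hgv]
    have step2 : (∫ v in Ioi 0, w₁ v * osPdf g (cdfOf g) i m v ^ 2)
        = ∫ x in Ioi 0, (w₁ (η x) / η' x) * osPdf f (cdfOf f) i m x ^ 2 := by
      have himg := integral_image_eq_integral_abs_deriv_smul measurableSet_Ioi
          (fun x hx => (hηd x (mem_Ici.2 (le_of_lt (mem_Ioi.1 hx)))).hasDerivWithinAt)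
          (hηmono.injOn.mono Ioi_subset_Ici_self)
          (fun v => w₁ v * osPdf g (cdfOf g) i m v ^ 2)
      rw [himg_Ioi] at himg
      rw [himg]
      apply setIntegral_congr_fun measurableSet_Ioi
      intro x hx
      have hx0 : (0:ℝ) < x := hx
      show |η' x| • (w₁ (η x) * osPdf g (cdfOf g) i m (η x) ^ 2)
          = (w₁ (η x) / η' x) * osPdf f (cdfOf f) i m x ^ 2
      have hη'x := hη'pos x hx0
      have hos : osPdf g (cdfOf g) i m (η x) = osPdf f (cdfOf f) i m x / η' x := by
        unfold osPdf
        rw [hGF x hx0, hgη x hx0]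
        ring
      rw [smul_eq_mul, hos, abs_of_pos hη'x, div_pow]
      field_simp
    have nn : ∀ x ∈ Ioi (0:ℝ), 0 ≤ (w₁ (η x) / η' x) * osPdf f (cdfOf f) i m x ^ 2 := by
      intro x hx
      exact mul_nonneg (div_nonneg (hwnn (η x) (hηpos x hx).le) (hη'pos x hx).le) (sq_nonneg _)
    have hle : ∀ x ∈ Ioi (0:ℝ), (w₁ (η x) / η' x) * osPdf f (cdfOf f) i m x ^ 2
        ≤ w₁ x * osPdf f (cdfOf f) i m x ^ 2 := by
      intro x hx
      apply mul_le_mul_of_nonneg_right _ (sq_nonneg _)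
      rw [div_le_iff₀ (hη'pos x hx)]
      calc w₁ (η x) ≤ η' x * w₁ x := hwη x (le_of_lt hx)
        _ = w₁ x * η' x := mul_comm _ _
    have intf : IntegrableOn (fun x => w₁ x * osPdf f (cdfOf f) i m x ^ 2) (Ioi 0) :=
      (hφint i m).integrableOn
    have intq : IntegrableOn
        (fun x => (w₁ (η x) / η' x) * osPdf f (cdfOf f) i m x ^ 2) (Ioi 0) := by
      apply Integrable.mono' intf
      · have hηae : AEMeasurable η (volume.restrict (Ioi (0:ℝ))) :=
          (hηcont.mono (fun t ht => le_of_lt ht)).aemeasurable measurableSet_Ioi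
        have h1 : AEMeasurable (fun x => w₁ (η x)) (volume.restrict (Ioi (0:ℝ))) :=
          hw.comp_aemeasurable hηae
        have h2 : AEMeasurable η' (volume.restrict (Ioi (0:ℝ))) :=
          (hη'c.mono (fun t ht => le_of_lt ht)).aemeasurable measurableSet_Ioi
        exact (h1.div h2).aestronglyMeasurable.mul ((hos2meas i m).restrict)
      · rw [ae_restrict_iff' measurableSet_Ioi]
        apply ae_of_all
        intro x hx
        rw [Real.norm_eq_abs, abs_of_nonneg (nn x hx)]
        exact hle x hx
    calc (∫ v, w₁ v * osPdf g (cdfOf g) i m v ^ 2)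
        = ∫ v in Ioi 0, w₁ v * osPdf g (cdfOf g) i m v ^ 2 := step1
      _ = ∫ x in Ioi 0, (w₁ (η x) / η' x) * osPdf f (cdfOf f) i m x ^ 2 := step2
      _ ≤ ∫ x in Ioi 0, w₁ x * osPdf f (cdfOf f) i m x ^ 2 :=
          setIntegral_mono_on intq intf measurableSet_Ioi hle
      _ ≤ ∫ x, w₁ x * osPdf f (cdfOf f) i m x ^ 2 :=
          setIntegral_le_integral (hφint i m) (ae_of_all _ (hφnn_f i m))
  have keynn_g : ∀ i m : ℕ, 0 ≤ ∫ v, w₁ v * osPdf g (cdfOf g) i m v ^ 2 := fun i m =>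
    integral_nonneg (hφnn_g i m)
  have keynn_f : ∀ i m : ℕ, 0 ≤ ∫ x, w₁ x * osPdf f (cdfOf f) i m x ^ 2 := fun i m =>
    integral_nonneg (hφnn_f i m)
  -- conclusion
  intro n _ a b _ _ _ _
  rw [Jprss, Jprss]
  by_cases hpar : Even n
  · rw [if_pos hpar, if_pos hpar]
    have h1 : (∫ v, w₁ v * osPdf g (cdfOf g) a n v ^ 2) ^ (n / 2)
        ≤ (∫ x, w₁ x * osPdf f (cdfOf f) a n x ^ 2) ^ (n / 2) :=
      pow_le_pow_left₀ (keynn_g a n) (key a n) _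
    have h2 : (∫ v, w₁ v * osPdf g (cdfOf g) b n v ^ 2) ^ (n / 2)
        ≤ (∫ x, w₁ x * osPdf f (cdfOf f) b n x ^ 2) ^ (n / 2) :=
      pow_le_pow_left₀ (keynn_g b n) (key b n) _
    have h3 := mul_le_mul h1 h2 (pow_nonneg (keynn_g b n) _) (pow_nonneg (keynn_f a n) _)
    nlinarith [h3]
  · rw [if_neg hpar, if_neg hpar]
    have h1 : (∫ v, w₁ v * osPdf g (cdfOf g) a n v ^ 2) ^ ((n - 1) / 2)
        ≤ (∫ x, w₁ x * osPdf f (cdfOf f) a n x ^ 2) ^ ((n - 1) / 2) :=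
      pow_le_pow_left₀ (keynn_g a n) (key a n) _
    have h2 : (∫ v, w₁ v * osPdf g (cdfOf g) b n v ^ 2) ^ ((n - 1) / 2)
        ≤ (∫ x, w₁ x * osPdf f (cdfOf f) b n x ^ 2) ^ ((n - 1) / 2) :=
      pow_le_pow_left₀ (keynn_g b n) (key b n) _
    have h3 := mul_le_mul h1 h2 (pow_nonneg (keynn_g b n) _) (pow_nonneg (keynn_f a n) _)
    have h4 := key ((n + 1) / 2) n
    have h5 := mul_le_mul h3 h4 (keynn_g ((n + 1) / 2) n)
      (mul_nonneg (pow_nonneg (keynn_f a n) _) (pow_nonneg (keynn_f b n) _))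
    nlinarith [h5]
end

section
/- Let f be a pdf that is continuous and strictly positive on an open interval S and zero outside S, with cdf F, and let w₁ : ℝ → [0,∞) be measurable with ∫ w₁(x) f(x)^2 dx < ∞. Let n ≥ 2 be even and let a, b be integers with 1 ≤ a, b ≤ n. Then J^{w₁}(X_PRSS^(n)) ≥ K · J^{w₁}(X_SRS^(n)), where K = (n^{2n}/(n-1)^{2n(n-1)}) · (C(n-1,a-1)² (a-1)^{2a-2} (n-a)^{2n-2a})^{n/2} · (C(n-1,b-1)² (b-1)^{2b-2} (n-b)^{2n-2b})^{n/2}, with C(·,·) binomial coefficients and the convention 0^0 = 1. In particular, if J^{w₁}(X_SRS^(n)) < 0, then J^{w₁}(X_PRSS^(n))/J^{w₁}(X_SRS^(n)) ≤ K. -/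
open MeasureTheory Real Set

/-- Weighted AM-GM bound: `u^p (1-u)^q (p+q)^{p+q} ≤ p^p q^q` for `u ∈ [0,1]`. -/
lemma amgm_bound (p q : ℕ) (u : ℝ) (hu0 : 0 ≤ u) (hu1 : u ≤ 1) :
    u ^ p * (1 - u) ^ q * ((p + q : ℕ) : ℝ) ^ (p + q) ≤ (p : ℝ) ^ p * (q : ℝ) ^ q := by
  have hv0 : (0:ℝ) ≤ 1 - u := by linarith
  rcases Nat.eq_zero_or_pos p with hp | hp
  · subst hp
    simp only [pow_zero, one_mul, Nat.cast_zero, zero_add]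
    have h1 : (1 - u) ^ q ≤ 1 := pow_le_one₀ hv0 (by linarith)
    exact mul_le_of_le_one_left (by positivity) h1
  rcases Nat.eq_zero_or_pos q with hq | hq
  · subst hq
    simp only [pow_zero, mul_one, Nat.cast_zero, add_zero]
    have h1 : u ^ p ≤ 1 := pow_le_one₀ hu0 hu1
    exact mul_le_of_le_one_left (by positivity) h1
  · have hp' : (0:ℝ) < p := by exact_mod_cast hp
    have hq' : (0:ℝ) < q := by exact_mod_cast hq
    set s : ℝ := (p:ℝ) + (q:ℝ) with hs
    have hs' : 0 < s := by linarith
    have hcast : ((p + q : ℕ) : ℝ) = s := by rw [hs]; push_cast; ring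
    rw [hcast]
    set x := u * s / p with hx
    set y := (1 - u) * s / q with hy
    have hx0 : 0 ≤ x := div_nonneg (mul_nonneg hu0 hs'.le) hp'.le
    have hy0 : 0 ≤ y := div_nonneg (mul_nonneg hv0 hs'.le) hq'.le
    have hw1 : (0:ℝ) ≤ (p:ℝ) / s := by positivity
    have hw2 : (0:ℝ) ≤ (q:ℝ) / s := by positivity
    have hwsum : (p:ℝ) / s + (q:ℝ) / s = 1 := by field_simp; exact hs.symm
    have key := Real.geom_mean_le_arith_mean2_weighted hw1 hw2 hx0 hy0 hwsum
    have harith : (p:ℝ) / s * x + (q:ℝ) / s * y = 1 := by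
      rw [hx, hy]; field_simp; ring
    rw [harith] at key
    have key2 : (x ^ ((p:ℝ) / s) * y ^ ((q:ℝ) / s)) ^ s ≤ 1 := by
      calc (x ^ ((p:ℝ) / s) * y ^ ((q:ℝ) / s)) ^ s ≤ (1:ℝ) ^ s :=
            Real.rpow_le_rpow (by positivity) key hs'.le
        _ = 1 := Real.one_rpow s
    have key3 : x ^ p * y ^ q ≤ 1 := by
      rw [Real.mul_rpow (Real.rpow_nonneg hx0 _) (Real.rpow_nonneg hy0 _),
        ← Real.rpow_mul hx0, ← Real.rpow_mul hy0, div_mul_cancel₀ _ hs'.ne',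
        div_mul_cancel₀ _ hs'.ne', Real.rpow_natCast, Real.rpow_natCast] at key2
      exact key2
    have hxp : x ^ p * (p:ℝ) ^ p = u ^ p * s ^ p := by
      rw [hx, div_pow, div_mul_cancel₀ _ (pow_ne_zero p hp'.ne'), mul_pow]
    have hyq : y ^ q * (q:ℝ) ^ q = (1 - u) ^ q * s ^ q := by
      rw [hy, div_pow, div_mul_cancel₀ _ (pow_ne_zero q hq'.ne'), mul_pow]
    have expand : u ^ p * (1 - u) ^ q * s ^ (p + q) =
        (x ^ p * y ^ q) * ((p:ℝ) ^ p * (q:ℝ) ^ q) := by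
      rw [pow_add]
      calc u ^ p * (1 - u) ^ q * (s ^ p * s ^ q)
          = (u ^ p * s ^ p) * ((1 - u) ^ q * s ^ q) := by ring
        _ = (x ^ p * (p:ℝ) ^ p) * (y ^ q * (q:ℝ) ^ q) := by rw [hxp, hyq]
        _ = (x ^ p * y ^ q) * ((p:ℝ) ^ p * (q:ℝ) ^ q) := by ring
    rw [expand]
    have hpq0 : (0:ℝ) ≤ (p:ℝ) ^ p * (q:ℝ) ^ q := by positivity
    simpa using mul_le_mul_of_nonneg_right key3 hpq0

/-- Auxiliary algebraic identity used to assemble the constant `K`. -/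
lemma Kfactor (x s c d e c' d' e' : ℝ) (hs : s ≠ 0) (m k : ℕ) :
    x ^ (2 * m + 2 * m) / s ^ (2 * k * m + 2 * k * m) * (c * d * e) ^ m * (c' * d' * e') ^ m =
      (x ^ 2 * c * d * e / s ^ (2 * k)) ^ m * (x ^ 2 * c' * d' * e' / s ^ (2 * k)) ^ m := by
  ring

/-- lower bound for the GWE of PRSS data in terms of SRS data, `n` even. -/
theorem Jprss_ge_K_mul_Jsrs_of_even
    (f w₁ : ℝ → ℝ) (S : Set ℝ)
    (hS : IsOpen S) (hSconn : S.OrdConnected)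
    (hfc : ContinuousOn f S) (hfpos : ∀ x ∈ S, 0 < f x) (hfzero : ∀ x ∉ S, f x = 0)
    (hfint : Integrable f) (hfpdf : ∫ x, f x = 1)
    (hw : Measurable w₁) (hwnn : ∀ x, 0 ≤ w₁ x)
    (hwf : Integrable (fun x => w₁ x * f x ^ 2))
    (n a b : ℕ) (hn : 2 ≤ n) (hne : Even n)
    (ha1 : 1 ≤ a) (han : a ≤ n) (hb1 : 1 ≤ b) (hbn : b ≤ n) :
    let K : ℝ :=
      ((n : ℝ) ^ (2 * n) / ((n - 1 : ℕ) : ℝ) ^ (2 * n * (n - 1))) *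
        ((Nat.choose (n - 1) (a - 1) : ℝ) ^ 2 * ((a - 1 : ℕ) : ℝ) ^ (2 * a - 2) *
            ((n - a : ℕ) : ℝ) ^ (2 * n - 2 * a)) ^ (n / 2) *
        ((Nat.choose (n - 1) (b - 1) : ℝ) ^ 2 * ((b - 1 : ℕ) : ℝ) ^ (2 * b - 2) *
            ((n - b : ℕ) : ℝ) ^ (2 * n - 2 * b)) ^ (n / 2)
    let Jsrs : ℝ := -(1 / 2) * (∫ x, w₁ x * f x ^ 2) ^ n
    K * Jsrs ≤ Jprss w₁ f (cdfOf f) n a b ∧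
      (Jsrs < 0 → Jprss w₁ f (cdfOf f) n a b / Jsrs ≤ K) := by
  intro K Jsrs
  have hK : K =
      ((n : ℝ) ^ (2 * n) / ((n - 1 : ℕ) : ℝ) ^ (2 * n * (n - 1))) *
        ((Nat.choose (n - 1) (a - 1) : ℝ) ^ 2 * ((a - 1 : ℕ) : ℝ) ^ (2 * a - 2) *
            ((n - a : ℕ) : ℝ) ^ (2 * n - 2 * a)) ^ (n / 2) *
        ((Nat.choose (n - 1) (b - 1) : ℝ) ^ 2 * ((b - 1 : ℕ) : ℝ) ^ (2 * b - 2) *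
            ((n - b : ℕ) : ℝ) ^ (2 * n - 2 * b)) ^ (n / 2) := rfl
  have hJ : Jsrs = -(1 / 2) * (∫ x, w₁ x * f x ^ 2) ^ n := rfl
  clear_value K Jsrs
  set F := cdfOf f with hF
  have hf0 : ∀ x, 0 ≤ f x := by
    intro x
    by_cases h : x ∈ S
    · exact (hfpos x h).le
    · rw [hfzero x h]
  have hF0 : ∀ x, 0 ≤ F x := fun x =>
    setIntegral_nonneg measurableSet_Iic fun t _ => hf0 t
  have hF1 : ∀ x, F x ≤ 1 := by
    intro x
    rw [← hfpdf]
    exact setIntegral_le_integral hfint (Filter.Eventually.of_forall hf0)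
  set I := ∫ x, w₁ x * f x ^ 2 with hI
  have hI0 : 0 ≤ I := integral_nonneg fun x => mul_nonneg (hwnn x) (sq_nonneg _)
  have hspos : (0:ℝ) < ((n - 1 : ℕ) : ℝ) := by
    have : 0 < n - 1 := by omega
    exact_mod_cast this
  -- key bound for a single rank i
  have key : ∀ i : ℕ, 1 ≤ i → i ≤ n →
      (∫ x, w₁ x * osPdf f F i n x ^ 2) ≤
        ((n:ℝ) ^ 2 * ((n - 1).choose (i - 1) : ℝ) ^ 2 * ((i - 1 : ℕ) : ℝ) ^ (2 * (i - 1)) *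
          ((n - i : ℕ) : ℝ) ^ (2 * (n - i)) / ((n - 1 : ℕ) : ℝ) ^ (2 * (n - 1))) * I := by
    intro i hi1 hin
    have hfacpos : (0:ℝ) < ((i - 1).factorial : ℝ) * ((n - i).factorial : ℝ) :=
      mul_pos (by exact_mod_cast (i - 1).factorial_pos) (by exact_mod_cast (n - i).factorial_pos)
    have hfac : ((n.factorial : ℝ) / (((i - 1).factorial : ℝ) * ((n - i).factorial : ℝ))) =
        (n : ℝ) * ((n - 1).choose (i - 1) : ℝ) := by
      have h1 := Nat.choose_mul_factorial_mul_factorial (show i - 1 ≤ n - 1 by omega)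
      have h2 : n - 1 - (i - 1) = n - i := by omega
      rw [h2] at h1
      have h3 : n * (n - 1).factorial = n.factorial := Nat.mul_factorial_pred (by omega)
      rw [div_eq_iff hfacpos.ne', ← h3, ← h1]
      push_cast
      ring
    calc (∫ x, w₁ x * osPdf f F i n x ^ 2)
        ≤ ∫ x, ((n:ℝ) ^ 2 * ((n - 1).choose (i - 1) : ℝ) ^ 2 * ((i - 1 : ℕ) : ℝ) ^ (2 * (i - 1)) *
            ((n - i : ℕ) : ℝ) ^ (2 * (n - i)) / ((n - 1 : ℕ) : ℝ) ^ (2 * (n - 1))) *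
            (w₁ x * f x ^ 2) := by
          apply integral_mono_of_nonneg
            (Filter.Eventually.of_forall fun x => mul_nonneg (hwnn x) (sq_nonneg _))
            (hwf.const_mul _)
          filter_upwards with x
          have hu0 := hF0 x
          have hu1 := hF1 x
          have hv0 : (0:ℝ) ≤ 1 - F x := by linarith
          have hb := amgm_bound (i - 1) (n - i) (F x) hu0 hu1
          have hpq : (i - 1) + (n - i) = n - 1 := by omega
          rw [hpq] at hb
          have h0 : 0 ≤ F x ^ (i - 1) * (1 - F x) ^ (n - i) * ((n - 1 : ℕ) : ℝ) ^ (n - 1) :=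
            mul_nonneg (mul_nonneg (pow_nonneg hu0 _) (pow_nonneg hv0 _)) (pow_nonneg hspos.le _)
          have hsq := mul_self_le_mul_self h0 hb
          have hb2 : (F x ^ (i - 1) * (1 - F x) ^ (n - i)) ^ 2 * ((n - 1 : ℕ) : ℝ) ^ (2 * (n - 1)) ≤
              (((i - 1 : ℕ) : ℝ) ^ (i - 1) * ((n - i : ℕ) : ℝ) ^ (n - i)) ^ 2 := by
            calc (F x ^ (i - 1) * (1 - F x) ^ (n - i)) ^ 2 * ((n - 1 : ℕ) : ℝ) ^ (2 * (n - 1))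
                = (F x ^ (i - 1) * (1 - F x) ^ (n - i) * ((n - 1 : ℕ) : ℝ) ^ (n - 1)) *
                  (F x ^ (i - 1) * (1 - F x) ^ (n - i) * ((n - 1 : ℕ) : ℝ) ^ (n - 1)) := by ring
              _ ≤ (((i - 1 : ℕ) : ℝ) ^ (i - 1) * ((n - i : ℕ) : ℝ) ^ (n - i)) *
                  (((i - 1 : ℕ) : ℝ) ^ (i - 1) * ((n - i : ℕ) : ℝ) ^ (n - i)) := hsq
              _ = (((i - 1 : ℕ) : ℝ) ^ (i - 1) * ((n - i : ℕ) : ℝ) ^ (n - i)) ^ 2 := by ring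
          have hb3 : (F x ^ (i - 1) * (1 - F x) ^ (n - i)) ^ 2 ≤
              (((i - 1 : ℕ) : ℝ) ^ (i - 1) * ((n - i : ℕ) : ℝ) ^ (n - i)) ^ 2 /
                ((n - 1 : ℕ) : ℝ) ^ (2 * (n - 1)) :=
            (le_div_iff₀ (by positivity)).mpr hb2
          have e1 : w₁ x * osPdf f F i n x ^ 2 =
              (F x ^ (i - 1) * (1 - F x) ^ (n - i)) ^ 2 *
                (((n : ℝ) * ((n - 1).choose (i - 1) : ℝ)) ^ 2 * (w₁ x * f x ^ 2)) := by
            simp only [osPdf]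
            rw [hfac]
            ring
          rw [e1]
          have hR0 : 0 ≤ ((n : ℝ) * ((n - 1).choose (i - 1) : ℝ)) ^ 2 * (w₁ x * f x ^ 2) :=
            mul_nonneg (sq_nonneg _) (mul_nonneg (hwnn x) (sq_nonneg _))
          calc (F x ^ (i - 1) * (1 - F x) ^ (n - i)) ^ 2 *
                (((n : ℝ) * ((n - 1).choose (i - 1) : ℝ)) ^ 2 * (w₁ x * f x ^ 2))
              ≤ ((((i - 1 : ℕ) : ℝ) ^ (i - 1) * ((n - i : ℕ) : ℝ) ^ (n - i)) ^ 2 /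
                  ((n - 1 : ℕ) : ℝ) ^ (2 * (n - 1))) *
                (((n : ℝ) * ((n - 1).choose (i - 1) : ℝ)) ^ 2 * (w₁ x * f x ^ 2)) :=
                mul_le_mul_of_nonneg_right hb3 hR0
            _ = ((n:ℝ) ^ 2 * ((n - 1).choose (i - 1) : ℝ) ^ 2 * ((i - 1 : ℕ) : ℝ) ^ (2 * (i - 1)) *
                ((n - i : ℕ) : ℝ) ^ (2 * (n - i)) / ((n - 1 : ℕ) : ℝ) ^ (2 * (n - 1))) *
                (w₁ x * f x ^ 2) := by ring
      _ = ((n:ℝ) ^ 2 * ((n - 1).choose (i - 1) : ℝ) ^ 2 * ((i - 1 : ℕ) : ℝ) ^ (2 * (i - 1)) *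
            ((n - i : ℕ) : ℝ) ^ (2 * (n - i)) / ((n - 1 : ℕ) : ℝ) ^ (2 * (n - 1))) * I := by
          rw [hI, integral_const_mul]
  obtain ⟨m, hm⟩ := id hne
  have hm2 : n / 2 = m := by omega
  set Da : ℝ := (n:ℝ) ^ 2 * ((n - 1).choose (a - 1) : ℝ) ^ 2 * ((a - 1 : ℕ) : ℝ) ^ (2 * (a - 1)) *
      ((n - a : ℕ) : ℝ) ^ (2 * (n - a)) / ((n - 1 : ℕ) : ℝ) ^ (2 * (n - 1)) with hDa
  set Db : ℝ := (n:ℝ) ^ 2 * ((n - 1).choose (b - 1) : ℝ) ^ 2 * ((b - 1 : ℕ) : ℝ) ^ (2 * (b - 1)) *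
      ((n - b : ℕ) : ℝ) ^ (2 * (n - b)) / ((n - 1 : ℕ) : ℝ) ^ (2 * (n - 1)) with hDb
  have hA := key a ha1 han
  have hB := key b hb1 hbn
  set A := ∫ x, w₁ x * osPdf f F a n x ^ 2 with hAdef
  set B := ∫ x, w₁ x * osPdf f F b n x ^ 2 with hBdef
  have hA0 : 0 ≤ A := integral_nonneg fun x => mul_nonneg (hwnn x) (sq_nonneg _)
  have hB0 : 0 ≤ B := integral_nonneg fun x => mul_nonneg (hwnn x) (sq_nonneg _)
  have hDa0 : 0 ≤ Da := by rw [hDa]; positivity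
  have hDb0 : 0 ≤ Db := by rw [hDb]; positivity
  have hKeq : K = Da ^ m * Db ^ m := by
    rw [hK, hDa, hDb, hm2, show 2 * a - 2 = 2 * (a - 1) by omega,
      show 2 * n - 2 * a = 2 * (n - a) by omega, show 2 * b - 2 = 2 * (b - 1) by omega,
      show 2 * n - 2 * b = 2 * (n - b) by omega]
    rw [show 2 * n * (n - 1) = 2 * (n - 1) * m + 2 * (n - 1) * m by rw [hm]; ring,
      show 2 * n = 2 * m + 2 * m by omega]
    exact Kfactor _ _ _ _ _ _ _ _ hspos.ne' m (n - 1)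
  have hJp : Jprss w₁ f F n a b = -(1 / 2) * A ^ m * B ^ m := by
    unfold Jprss
    rw [if_pos hne, hm2]
  have hmain : K * Jsrs ≤ Jprss w₁ f F n a b := by
    rw [hJ, hJp, hKeq]
    have h1 : A ^ m ≤ (Da * I) ^ m := pow_le_pow_left₀ hA0 hA m
    have h2 : B ^ m ≤ (Db * I) ^ m := pow_le_pow_left₀ hB0 hB m
    have h3 : A ^ m * B ^ m ≤ (Da * I) ^ m * (Db * I) ^ m :=
      mul_le_mul h1 h2 (pow_nonneg hB0 m) (pow_nonneg (mul_nonneg hDa0 hI0) m)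
    have h4 : (Da * I) ^ m * (Db * I) ^ m = Da ^ m * Db ^ m * I ^ n := by
      rw [hm]; ring
    rw [h4] at h3
    nlinarith [h3]
  exact ⟨hmain, fun hneg => (div_le_iff_of_neg hneg).mpr hmain⟩
end

section
/- Let f be a pdf that is continuous and strictly positive on an open interval S and zero outside S, with cdf F, and let w₁ : ℝ → [0,∞) be measurable with ∫ w₁(x) f(x)^2 dx < ∞. Let n ≥ 3 be odd and let a, b be integers with 1 ≤ a, b ≤ n. Then J^{w₁}(X_PRSS^(n)) ≥ K · J^{w₁}(X_SRS^(n)), where K = (n^{2n-2}/(n-1)^{2(n-1)²}) · ((n!)²/((((n-1)/2)!)^4)) · (C(n-1,a-1)² (a-1)^{2a-2} (n-a)^{2n-2a})^{(n-1)/2} · (C(n-1,b-1)² (b-1)^{2b-2} (n-b)^{2n-2b})^{(n-1)/2}, with C(·,·) binomial coefficients and the convention 0^0 = 1. In particular, if J^{w₁}(X_SRS^(n)) < 0, then J^{w₁}(X_PRSS^(n))/J^{w₁}(X_SRS^(n)) ≤ K. -/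
open MeasureTheory Real Set

/- ### Auxiliary lemmas -/

lemma aux_pow_le (s : ℝ) (hs : 0 ≤ s) (p : ℕ) : s ^ p ≤ (p:ℝ)^p * Real.exp (s - p) := by
  rcases Nat.eq_zero_or_pos p with h | h
  · subst h; simpa using Real.one_le_exp (by linarith)
  · have hp : (0:ℝ) < p := by exact_mod_cast h
    have h1 : s ≤ (p:ℝ) * Real.exp (s/p - 1) := by
      have h2 := Real.add_one_le_exp (s/p - 1)
      have h3 : (p:ℝ) * (s/p - 1 + 1) ≤ p * Real.exp (s/p-1) :=
        mul_le_mul_of_nonneg_left h2 hp.le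
      calc s = (p:ℝ) * (s/p - 1 + 1) := by field_simp; ring
        _ ≤ _ := h3
    calc s^p ≤ ((p:ℝ) * Real.exp (s/p-1))^p :=
          pow_le_pow_left₀ hs h1 p
      _ = (p:ℝ)^p * Real.exp (s - p) := by
          rw [mul_pow, ← Real.exp_nat_mul]
          congr 1; field_simp

lemma beta_bd (u : ℝ) (h0 : 0 ≤ u) (h1 : u ≤ 1) (p q : ℕ) :
    u ^ p * (1 - u) ^ q * ((p:ℝ) + q) ^ (p + q) ≤ (p:ℝ)^p * (q:ℝ)^q := by
  set s := u * ((p:ℝ)+q) with hsdef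
  set t := (1-u) * ((p:ℝ)+q) with htdef
  have hs : 0 ≤ s := mul_nonneg h0 (by positivity)
  have ht : 0 ≤ t := mul_nonneg (by linarith) (by positivity)
  have h2 := aux_pow_le s hs p
  have h3 := aux_pow_le t ht q
  have hst : s + t = (p:ℝ) + q := by rw [hsdef, htdef]; ring
  have key : s^p * t^q ≤ (p:ℝ)^p * (q:ℝ)^q := by
    calc s^p * t^q ≤ ((p:ℝ)^p * Real.exp (s-p)) * ((q:ℝ)^q * Real.exp (t-q)) :=
      mul_le_mul h2 h3 (pow_nonneg ht q) (by positivity)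
    _ = (p:ℝ)^p * (q:ℝ)^q * Real.exp ((s-p)+(t-q)) := by rw [Real.exp_add]; ring
    _ = (p:ℝ)^p * (q:ℝ)^q := by
        rw [show (s-(p:ℝ))+(t-q) = 0 by linarith, Real.exp_zero, mul_one]
  calc u^p * (1-u)^q * ((p:ℝ)+q)^(p+q) = s^p * t^q := by
        rw [pow_add, hsdef, htdef, mul_pow, mul_pow]; ring
  _ ≤ _ := key

lemma coeff_eq (i n : ℕ) (h1 : 1 ≤ i) (h2 : i ≤ n) :
    ((Nat.factorial n : ℝ) / ((Nat.factorial (i - 1) : ℝ) * (Nat.factorial (n - i) : ℝ)))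
      = (n:ℝ) * (Nat.choose (n-1) (i-1) : ℝ) := by
  have hni : n - 1 - (i - 1) = n - i := by omega
  have h := Nat.choose_mul_factorial_mul_factorial (show i - 1 ≤ n - 1 by omega)
  rw [hni] at h
  have hn : (n.factorial : ℝ) = n * ((n-1).factorial) := by
    obtain ⟨m, rfl⟩ : ∃ m, n = m + 1 := ⟨n - 1, by omega⟩
    simp [Nat.factorial_succ]
  have h' : ((n-1).factorial : ℝ)
      = (Nat.choose (n-1) (i-1) : ℝ) * (i-1).factorial * (n-i).factorial := by
    exact_mod_cast congrArg (Nat.cast (R := ℝ)) h.symm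
  have hf1 : ((i-1).factorial : ℝ) ≠ 0 := by positivity
  have hf2 : ((n-i).factorial : ℝ) ≠ 0 := by positivity
  rw [hn, h']
  field_simp

lemma beta_bd' (u : ℝ) (h0 : 0 ≤ u) (h1 : u ≤ 1) (i n : ℕ)
    (h1i : 1 ≤ i) (h2 : i ≤ n) (hn : 2 ≤ n) :
    u ^ (2*(i-1)) * (1 - u) ^ (2*(n-i)) ≤
      ((i-1 : ℕ):ℝ)^(2*(i-1)) * ((n-i : ℕ):ℝ)^(2*(n-i)) / ((n-1 : ℕ):ℝ)^(2*(n-1)) := by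
  have hb := beta_bd u h0 h1 (2*(i-1)) (2*(n-i))
  have hcast : ((2*(i-1) : ℕ):ℝ) + ((2*(n-i) : ℕ):ℝ) = ((2*(n-1):ℕ):ℝ) := by
    have : 2*(i-1) + 2*(n-i) = 2*(n-1) := by omega
    exact_mod_cast congrArg (Nat.cast (R := ℝ)) this
  have hexp : 2*(i-1) + 2*(n-i) = 2*(n-1) := by omega
  rw [hcast, hexp] at hb
  have e1 : ((2*(i-1):ℕ):ℝ) = 2 * ((i-1:ℕ):ℝ) := by push_cast; ring
  have e2 : ((2*(n-i):ℕ):ℝ) = 2 * ((n-i:ℕ):ℝ) := by push_cast; ring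
  have e3 : ((2*(n-1):ℕ):ℝ) = 2 * ((n-1:ℕ):ℝ) := by push_cast; ring
  rw [e1, e2, e3, mul_pow, mul_pow, mul_pow] at hb
  have h2pos : (0:ℝ) < (2:ℝ)^(2*(n-1)) := by positivity
  have hb2 : u ^ (2*(i-1)) * (1-u)^(2*(n-i)) * ((n-1:ℕ):ℝ)^(2*(n-1)) ≤
      ((i-1:ℕ):ℝ)^(2*(i-1)) * ((n-i:ℕ):ℝ)^(2*(n-i)) := by
    have := le_of_mul_le_mul_right (a := (2:ℝ)^(2*(n-1)))
      (by calc u ^ (2*(i-1)) * (1-u)^(2*(n-i)) * ((n-1:ℕ):ℝ)^(2*(n-1)) * (2:ℝ)^(2*(n-1))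
              = u ^ (2*(i-1)) * (1-u)^(2*(n-i)) *
                  ((2:ℝ)^(2*(n-1)) * ((n-1:ℕ):ℝ)^(2*(n-1))) := by ring
            _ ≤ (2:ℝ)^(2*(i-1)) * ((i-1:ℕ):ℝ)^(2*(i-1)) *
                  ((2:ℝ)^(2*(n-i)) * ((n-i:ℕ):ℝ)^(2*(n-i))) := hb
            _ = ((i-1:ℕ):ℝ)^(2*(i-1)) * ((n-i:ℕ):ℝ)^(2*(n-i)) *
                  ((2:ℝ)^(2*(i-1)) * (2:ℝ)^(2*(n-i))) := by ring
            _ = ((i-1:ℕ):ℝ)^(2*(i-1)) * ((n-i:ℕ):ℝ)^(2*(n-i)) * (2:ℝ)^(2*(n-1)) := by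
                rw [← pow_add, hexp]) h2pos
    exact this
  have hden : (0:ℝ) < ((n-1:ℕ):ℝ)^(2*(n-1)) := by
    have h0' : (0:ℕ) < n - 1 := by omega
    have : (0:ℝ) < ((n-1:ℕ):ℝ) := by exact_mod_cast h0'
    positivity
  rw [le_div_iff₀ hden]
  exact hb2

lemma osInt_bound (f F w : ℝ → ℝ)
    (hw : Measurable w) (hwnn : ∀ x, 0 ≤ w x)
    (hfm : AEMeasurable f)
    (hFm : Measurable F) (hF0 : ∀ x, 0 ≤ F x) (hF1 : ∀ x, F x ≤ 1)
    (hwf : Integrable (fun x => w x * f x ^ 2))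
    (i n : ℕ) (h1i : 1 ≤ i) (h2 : i ≤ n) (hn : 2 ≤ n) :
    ∫ x, w x * osPdf f F i n x ^ 2 ≤
      ((n:ℝ)^2 * (Nat.choose (n-1) (i-1) : ℝ)^2 * ((i-1:ℕ):ℝ)^(2*(i-1)) *
        ((n-i:ℕ):ℝ)^(2*(n-i)) / ((n-1:ℕ):ℝ)^(2*(n-1))) * ∫ x, w x * f x ^ 2 := by
  set D : ℝ := (n:ℝ)^2 * (Nat.choose (n-1) (i-1) : ℝ)^2 * ((i-1:ℕ):ℝ)^(2*(i-1)) *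
        ((n-i:ℕ):ℝ)^(2*(n-i)) / ((n-1:ℕ):ℝ)^(2*(n-1)) with hD
  have hpt : ∀ x, w x * osPdf f F i n x ^ 2 ≤ D * (w x * f x ^ 2) := by
    intro x
    have hbb := beta_bd' (F x) (hF0 x) (hF1 x) i n h1i h2 hn
    unfold osPdf
    rw [coeff_eq i n h1i h2]
    calc w x * (((n:ℝ) * (Nat.choose (n-1) (i-1) : ℝ)) * F x ^ (i-1) * (1 - F x) ^ (n-i) * f x) ^ 2
        = (w x * ((n:ℝ) * (Nat.choose (n-1) (i-1) : ℝ))^2 * f x ^ 2) *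
            (F x ^ (2*(i-1)) * (1 - F x) ^ (2*(n-i))) := by ring
      _ ≤ (w x * ((n:ℝ) * (Nat.choose (n-1) (i-1) : ℝ))^2 * f x ^ 2) *
            (((i-1 : ℕ):ℝ)^(2*(i-1)) * ((n-i : ℕ):ℝ)^(2*(n-i)) / ((n-1 : ℕ):ℝ)^(2*(n-1))) := by
          apply mul_le_mul_of_nonneg_left hbb
          have := hwnn x; positivity
      _ = D * (w x * f x ^ 2) := by rw [hD]; ring
  have hmeas : AEStronglyMeasurable (fun x => w x * osPdf f F i n x ^ 2) volume := by
    apply AEMeasurable.aestronglyMeasurable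
    unfold osPdf
    fun_prop
  have hIos : Integrable (fun x => w x * osPdf f F i n x ^ 2) := by
    apply Integrable.mono' (hwf.const_mul D) hmeas
    filter_upwards with x
    rw [Real.norm_of_nonneg (mul_nonneg (hwnn x) (sq_nonneg _))]
    exact hpt x
  calc ∫ x, w x * osPdf f F i n x ^ 2 ≤ ∫ x, D * (w x * f x ^ 2) :=
        integral_mono hIos (hwf.const_mul D) hpt
    _ = D * ∫ x, w x * f x ^ 2 := integral_const_mul D _

lemma osInt_bound_mid (f F w : ℝ → ℝ)
    (hw : Measurable w) (hwnn : ∀ x, 0 ≤ w x)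
    (hfm : AEMeasurable f)
    (hFm : Measurable F) (hF0 : ∀ x, 0 ≤ F x) (hF1 : ∀ x, F x ≤ 1)
    (hwf : Integrable (fun x => w x * f x ^ 2))
    (i n : ℕ) (h1i : 1 ≤ i) (h2 : i ≤ n) :
    ∫ x, w x * osPdf f F i n x ^ 2 ≤
      (((n:ℝ) * (Nat.choose (n-1) (i-1) : ℝ))^2) * ∫ x, w x * f x ^ 2 := by
  set D : ℝ := ((n:ℝ) * (Nat.choose (n-1) (i-1) : ℝ))^2 with hD
  have hpt : ∀ x, w x * osPdf f F i n x ^ 2 ≤ D * (w x * f x ^ 2) := by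
    intro x
    unfold osPdf
    rw [coeff_eq i n h1i h2]
    have hu0 : 0 ≤ F x ^ (i-1) := pow_nonneg (hF0 x) _
    have hu1 : F x ^ (i-1) ≤ 1 := pow_le_one₀ (hF0 x) (hF1 x)
    have hv0 : 0 ≤ (1 - F x) ^ (n-i) := pow_nonneg (by linarith [hF1 x]) _
    have hv1 : (1 - F x) ^ (n-i) ≤ 1 := pow_le_one₀ (by linarith [hF1 x]) (by linarith [hF0 x])
    calc w x * (((n:ℝ) * (Nat.choose (n-1) (i-1) : ℝ)) * F x ^ (i-1) * (1 - F x) ^ (n-i) * f x) ^ 2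
        = (w x * ((n:ℝ) * (Nat.choose (n-1) (i-1) : ℝ))^2 * f x ^ 2) *
            ((F x ^ (i-1))^2 * ((1 - F x) ^ (n-i))^2) := by ring
      _ ≤ (w x * ((n:ℝ) * (Nat.choose (n-1) (i-1) : ℝ))^2 * f x ^ 2) * 1 := by
          apply mul_le_mul_of_nonneg_left
            (mul_le_one₀ (pow_le_one₀ hu0 hu1) (pow_nonneg hv0 2) (pow_le_one₀ hv0 hv1))
          have := hwnn x; positivity
      _ = D * (w x * f x ^ 2) := by rw [hD]; ring
  have hmeas : AEStronglyMeasurable (fun x => w x * osPdf f F i n x ^ 2) volume := by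
    apply AEMeasurable.aestronglyMeasurable
    unfold osPdf
    fun_prop
  have hIos : Integrable (fun x => w x * osPdf f F i n x ^ 2) := by
    apply Integrable.mono' (hwf.const_mul D) hmeas
    filter_upwards with x
    rw [Real.norm_of_nonneg (mul_nonneg (hwnn x) (sq_nonneg _))]
    exact hpt x
  calc ∫ x, w x * osPdf f F i n x ^ 2 ≤ ∫ x, D * (w x * f x ^ 2) :=
        integral_mono hIos (hwf.const_mul D) hpt
    _ = D * ∫ x, w x * f x ^ 2 := integral_const_mul D _

lemma alg_lemma (k : ℕ) (x dd Pa Pb G : ℝ) (hd : dd ≠ 0) :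
    (x^(4*k) / dd^(2*(2*k)^2)) * G * Pa^k * Pb^k
      = (x^2 * Pa / dd^(2*(2*k)))^k * (x^2 * Pb / dd^(2*(2*k)))^k * G := by
  rw [show 2*(2*k)^2 = 2*(2*k)*k + 2*(2*k)*k by ring, pow_add, pow_mul, div_pow, div_pow]
  have hy : dd^(2*(2*k)) ≠ 0 := pow_ne_zero _ hd
  field_simp
  ring

/-- lower bound for the GWE of PRSS data in terms of SRS data, `n` odd. -/
theorem Jprss_ge_K_mul_Jsrs_of_odd
    (f w₁ : ℝ → ℝ) (S : Set ℝ)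
    (hS : IsOpen S) (hSconn : S.OrdConnected)
    (hfc : ContinuousOn f S) (hfpos : ∀ x ∈ S, 0 < f x) (hfzero : ∀ x ∉ S, f x = 0)
    (hfint : Integrable f) (hfpdf : ∫ x, f x = 1)
    (hw : Measurable w₁) (hwnn : ∀ x, 0 ≤ w₁ x)
    (hwf : Integrable (fun x => w₁ x * f x ^ 2))
    (n a b : ℕ) (hn : 3 ≤ n) (hno : Odd n)
    (ha1 : 1 ≤ a) (han : a ≤ n) (hb1 : 1 ≤ b) (hbn : b ≤ n) :
    let K : ℝ :=
      ((n : ℝ) ^ (2 * n - 2) / ((n - 1 : ℕ) : ℝ) ^ (2 * (n - 1) ^ 2)) *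
        ((Nat.factorial n : ℝ) ^ 2 / (Nat.factorial ((n - 1) / 2) : ℝ) ^ 4) *
        ((Nat.choose (n - 1) (a - 1) : ℝ) ^ 2 * ((a - 1 : ℕ) : ℝ) ^ (2 * a - 2) *
            ((n - a : ℕ) : ℝ) ^ (2 * n - 2 * a)) ^ ((n - 1) / 2) *
        ((Nat.choose (n - 1) (b - 1) : ℝ) ^ 2 * ((b - 1 : ℕ) : ℝ) ^ (2 * b - 2) *
            ((n - b : ℕ) : ℝ) ^ (2 * n - 2 * b)) ^ ((n - 1) / 2)
    let Jsrs : ℝ := -(1 / 2) * (∫ x, w₁ x * f x ^ 2) ^ n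
    K * Jsrs ≤ Jprss w₁ f (cdfOf f) n a b ∧
      (Jsrs < 0 → Jprss w₁ f (cdfOf f) n a b / Jsrs ≤ K) := by
  obtain ⟨k, rfl⟩ : ∃ k, n = 2*k+1 := hno
  obtain ⟨a', rfl⟩ : ∃ t, a = t+1 := ⟨a-1, by omega⟩
  obtain ⟨b', rfl⟩ : ∃ t, b = t+1 := ⟨b-1, by omega⟩
  have hk1 : 1 ≤ k := by omega
  have ha' : a' ≤ 2*k := by omega
  have hb' : b' ≤ 2*k := by omega
  intro K Jsrs
  -- basic facts about f and its cdf
  have hf0 : ∀ x, 0 ≤ f x := fun x => by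
    by_cases hx : x ∈ S
    · exact (hfpos x hx).le
    · simp [hfzero x hx]
  have hfm : AEMeasurable f volume := by
    have hfeq : f = S.indicator f := funext fun x => by
      by_cases hx : x ∈ S
      · simp [Set.indicator_of_mem hx]
      · simp [Set.indicator_of_notMem hx, hfzero x hx]
    rw [hfeq]
    exact (aemeasurable_indicator_iff hS.measurableSet).mpr (hfc.aemeasurable hS.measurableSet)
  have hFmono : Monotone (cdfOf f) := by
    intro x y hxy
    apply setIntegral_mono_set hfint.integrableOn (Filter.Eventually.of_forall hf0)
    exact HasSubset.Subset.eventuallyLE (Iic_subset_Iic.mpr hxy)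
  have hFm : Measurable (cdfOf f) := hFmono.measurable
  have hF0 : ∀ x, 0 ≤ cdfOf f x := fun x =>
    setIntegral_nonneg measurableSet_Iic fun t _ => hf0 t
  have hF1 : ∀ x, cdfOf f x ≤ 1 := fun x =>
    hfpdf ▸ setIntegral_le_integral hfint (Filter.Eventually.of_forall hf0)
  -- per-index bounds
  have hE6a : 2*k+1-(a'+1) = 2*k-a' := by omega
  have hE6b : 2*k+1-(b'+1) = 2*k-b' := by omega
  have hIa := osInt_bound f (cdfOf f) w₁ hw hwnn hfm hFm hF0 hF1 hwf (a'+1) (2*k+1)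
    (by omega) (by omega) (by omega)
  have hIb := osInt_bound f (cdfOf f) w₁ hw hwnn hfm hFm hF0 hF1 hwf (b'+1) (2*k+1)
    (by omega) (by omega) (by omega)
  have hIc := osInt_bound_mid f (cdfOf f) w₁ hw hwnn hfm hFm hF0 hF1 hwf (k+1) (2*k+1)
    (by omega) (by omega)
  simp only [Nat.add_sub_cancel, hE6a] at hIa
  simp only [Nat.add_sub_cancel, hE6b] at hIb
  simp only [Nat.add_sub_cancel, show 2*k+1-(k+1) = k by omega] at hIc
  set Ga : ℝ := ((2*k+1:ℕ):ℝ)^2 * (Nat.choose (2*k) a' : ℝ)^2 * ((a':ℕ):ℝ)^(2*a') *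
      ((2*k-a':ℕ):ℝ)^(2*(2*k-a')) / ((2*k:ℕ):ℝ)^(2*(2*k)) with hGa
  set Gb : ℝ := ((2*k+1:ℕ):ℝ)^2 * (Nat.choose (2*k) b' : ℝ)^2 * ((b':ℕ):ℝ)^(2*b') *
      ((2*k-b':ℕ):ℝ)^(2*(2*k-b')) / ((2*k:ℕ):ℝ)^(2*(2*k)) with hGb
  set Gm : ℝ := (((2*k+1:ℕ):ℝ) * (Nat.choose (2*k) k : ℝ))^2 with hGm
  -- nonnegativity
  have hI0 : 0 ≤ ∫ x, w₁ x * f x ^ 2 :=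
    integral_nonneg fun x => mul_nonneg (hwnn x) (sq_nonneg _)
  have hIa0 : 0 ≤ ∫ x, w₁ x * osPdf f (cdfOf f) (a'+1) (2*k+1) x ^ 2 :=
    integral_nonneg fun x => mul_nonneg (hwnn x) (sq_nonneg _)
  have hIb0 : 0 ≤ ∫ x, w₁ x * osPdf f (cdfOf f) (b'+1) (2*k+1) x ^ 2 :=
    integral_nonneg fun x => mul_nonneg (hwnn x) (sq_nonneg _)
  have hIc0 : 0 ≤ ∫ x, w₁ x * osPdf f (cdfOf f) (k+1) (2*k+1) x ^ 2 :=
    integral_nonneg fun x => mul_nonneg (hwnn x) (sq_nonneg _)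
  have hGa0 : 0 ≤ Ga := by rw [hGa]; positivity
  have hGb0 : 0 ≤ Gb := by rw [hGb]; positivity
  have hGm0 : 0 ≤ Gm := by rw [hGm]; positivity
  -- the constant identity
  have hfac : ((2*k+1).factorial : ℝ)
      = ((2*k+1:ℕ):ℝ) * (Nat.choose (2*k) k : ℝ) * ((k.factorial : ℝ) * (k.factorial : ℝ)) := by
    have h := coeff_eq (k+1) (2*k+1) (by omega) (by omega)
    simp only [Nat.add_sub_cancel, show 2*k+1-(k+1) = k by omega] at h
    have hne : ((k.factorial : ℝ) * (k.factorial : ℝ)) ≠ 0 := by positivity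
    rw [div_eq_iff hne] at h
    exact h
  have hd : ((2*k:ℕ):ℝ) ≠ 0 := by
    have : (0:ℕ) < 2*k := by omega
    exact_mod_cast this.ne'
  have hkf : ((k.factorial : ℝ)) ≠ 0 := by positivity
  have hM : ((2*k+1).factorial : ℝ)^2 / ((k.factorial : ℝ))^4 = Gm := by
    rw [hfac, hGm]; field_simp
  have hGa' : Ga = ((2*k+1:ℕ):ℝ)^2 * ((Nat.choose (2*k) a' : ℝ)^2 * ((a':ℕ):ℝ)^(2*a') *
      ((2*k-a':ℕ):ℝ)^(2*(2*k-a'))) / ((2*k:ℕ):ℝ)^(2*(2*k)) := by rw [hGa]; ring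
  have hGb' : Gb = ((2*k+1:ℕ):ℝ)^2 * ((Nat.choose (2*k) b' : ℝ)^2 * ((b':ℕ):ℝ)^(2*b') *
      ((2*k-b':ℕ):ℝ)^(2*(2*k-b'))) / ((2*k:ℕ):ℝ)^(2*(2*k)) := by rw [hGb]; ring
  have hK : K = Ga^k * Gb^k * Gm := by
    unfold K
    simp only [Nat.add_sub_cancel, hE6a, hE6b,
      show 2*(2*k+1)-2 = 4*k by omega,
      show (2*k)/2 = k by omega,
      show 2*(a'+1)-2 = 2*a' by omega,
      show 2*(b'+1)-2 = 2*b' by omega,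
      show 2*(2*k+1)-2*(a'+1) = 2*(2*k-a') by omega,
      show 2*(2*k+1)-2*(b'+1) = 2*(2*k-b') by omega]
    rw [hM, hGa', hGb']
    exact alg_lemma k _ _ _ _ _ hd
  -- Jprss value
  have hne : ¬ Even (2*k+1) := Nat.not_even_iff_odd.mpr ⟨k, rfl⟩
  have hJp : Jprss w₁ f (cdfOf f) (2*k+1) (a'+1) (b'+1)
      = -(1/2) * (∫ x, w₁ x * osPdf f (cdfOf f) (a'+1) (2*k+1) x ^ 2)^k *
          (∫ x, w₁ x * osPdf f (cdfOf f) (b'+1) (2*k+1) x ^ 2)^k *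
          (∫ x, w₁ x * osPdf f (cdfOf f) (k+1) (2*k+1) x ^ 2) := by
    simp only [Jprss, if_neg hne, Nat.add_sub_cancel,
      show (2*k)/2 = k by omega, show (2*k+1+1)/2 = k+1 by omega]
  have hJs : Jsrs = -(1/2) * (∫ x, w₁ x * f x ^ 2)^(2*k+1) := rfl
  -- main chain
  have hmain : (∫ x, w₁ x * osPdf f (cdfOf f) (a'+1) (2*k+1) x ^ 2)^k *
      (∫ x, w₁ x * osPdf f (cdfOf f) (b'+1) (2*k+1) x ^ 2)^k *
      (∫ x, w₁ x * osPdf f (cdfOf f) (k+1) (2*k+1) x ^ 2)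
      ≤ (Ga^k * Gb^k * Gm) * (∫ x, w₁ x * f x ^ 2)^(2*k+1) := by
    have hpa := pow_le_pow_left₀ hIa0 hIa k
    have hpb := pow_le_pow_left₀ hIb0 hIb k
    have hGaI0 : 0 ≤ Ga * ∫ x, w₁ x * f x ^ 2 := mul_nonneg hGa0 hI0
    have hGbI0 : 0 ≤ Gb * ∫ x, w₁ x * f x ^ 2 := mul_nonneg hGb0 hI0
    calc (∫ x, w₁ x * osPdf f (cdfOf f) (a'+1) (2*k+1) x ^ 2)^k *
        (∫ x, w₁ x * osPdf f (cdfOf f) (b'+1) (2*k+1) x ^ 2)^k *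
        (∫ x, w₁ x * osPdf f (cdfOf f) (k+1) (2*k+1) x ^ 2)
        ≤ (Ga * ∫ x, w₁ x * f x ^ 2)^k * (Gb * ∫ x, w₁ x * f x ^ 2)^k *
            (Gm * ∫ x, w₁ x * f x ^ 2) := by
          apply mul_le_mul _ hIc hIc0
            (mul_nonneg (pow_nonneg hGaI0 k) (pow_nonneg hGbI0 k))
          exact mul_le_mul hpa hpb (pow_nonneg hIb0 k) (pow_nonneg hGaI0 k)
      _ = (Ga^k * Gb^k * Gm) * (∫ x, w₁ x * f x ^ 2)^(2*k+1) := by ring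
  have hfirst : K * Jsrs ≤ Jprss w₁ f (cdfOf f) (2*k+1) (a'+1) (b'+1) := by
    rw [hK, hJs, hJp]
    linarith [hmain]
  exact ⟨hfirst, fun hJ => (div_le_iff_of_neg hJ).mpr hfirst⟩
end

section
/- Let X be exponentially distributed with pdf f(x) = λ e^{-λx} on (0,∞), λ > 0, let m ≥ 1 be an integer and w₁(x) = x^m. Let n ≥ 2 be even with rank parameters a, b, 1 ≤ a, b ≤ n. Then J^{w₁}(X_PRSS^(n)) = -(Q_{1,n} (2n-2a+1)^{n/2} (2n-2b+1)^{n/2} / (2^{n+1} n^n λ^{n(m-1)})) · (E[W_{2a-1:2n}^m])^{n/2} · (E[W_{2b-1:2n}^m])^{n/2}, where Q_{1,n} = n^n C_{a,n}^{n/2} C_{b,n}^{n/2}, and E[W_{2i-1:2n}^m] = ∫_0^∞ x^m ψ_{2i-1:2n}(x) dx with ψ_{2i-1:2n}(x) = ((2n)!/((2i-2)!(2n-2i+1)!)) (1-e^{-x})^{2i-2} e^{-(2n-2i+2)x} the pdf of the (2i-1)-th order statistic of a standard exponential sample of size 2n. -/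
open MeasureTheory Real Set

lemma cdfOf_exp (lam : ℝ) (hlam : 0 < lam) (f : ℝ → ℝ)
    (hf : ∀ x > (0:ℝ), f x = lam * Real.exp (-(lam * x)))
    (hfzero : ∀ x ≤ (0:ℝ), f x = 0) {x : ℝ} (hx : 0 < x) :
    cdfOf f x = 1 - Real.exp (-(lam * x)) := by
  have hsplit : Iic x = Iic 0 ∪ Ioc 0 x := (Set.Iic_union_Ioc_eq_Iic hx.le).symm
  have hcont : Continuous fun t : ℝ => lam * Real.exp (-(lam * t)) := by
    continuity
  have hInt2 : IntegrableOn f (Ioc 0 x) := by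
    refine (hcont.integrableOn_Ioc).congr_fun ?_ measurableSet_Ioc
    intro t ht; exact (hf t ht.1).symm
  have hInt1 : IntegrableOn f (Iic 0) := by
    refine (integrableOn_zero (μ := volume)).congr_fun ?_ measurableSet_Iic
    intro t ht; exact (hfzero t ht).symm
  have h0 : ∫ t in Iic 0, f t = 0 := by
    apply setIntegral_eq_zero_of_forall_eq_zero
    intro t ht; exact hfzero t ht
  have hderiv : ∀ t ∈ uIcc (0:ℝ) x,
      HasDerivAt (fun t : ℝ => -Real.exp (-(lam * t))) (lam * Real.exp (-(lam * t))) t := by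
    intro t _
    have h1 : HasDerivAt (fun t : ℝ => -(lam * t)) (-lam) t := by
      simpa using ((hasDerivAt_id t).const_mul lam).fun_neg
    have h2 := h1.exp.fun_neg
    refine h2.congr_deriv ?_
    ring
  have hval : ∫ t in (0:ℝ)..x, lam * Real.exp (-(lam * t))
      = 1 - Real.exp (-(lam * x)) := by
    rw [intervalIntegral.integral_eq_sub_of_hasDerivAt hderiv
      ((hcont.intervalIntegrable 0 x))]
    simp [neg_add_eq_sub]
  have h2 : ∫ t in Ioc 0 x, f t = 1 - Real.exp (-(lam * x)) := by
    rw [setIntegral_congr_fun measurableSet_Ioc (fun t ht => hf t ht.1),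
      ← intervalIntegral.integral_of_le hx.le, hval]
  rw [cdfOf, hsplit, setIntegral_union (Iic_disjoint_Ioc le_rfl) measurableSet_Ioc hInt1 hInt2,
    h0, h2, zero_add]

lemma comb_id (j k : ℕ) :
    ((Nat.factorial (j+k+1) : ℝ) / (Nat.factorial j * Nat.factorial k))^2
    = ((Nat.choose (2*j) j : ℝ) * (Nat.choose (2*k) k : ℝ) /
        (Nat.choose (2*j+2*k+1) (j+k) : ℝ)) * ((2*k+1 : ℕ) : ℝ) *
      ((Nat.factorial (2*j+2*k+2) : ℝ) /
        ((Nat.factorial (2*j) : ℝ) * (Nat.factorial (2*k+1) : ℝ))) / 2 := by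
  have h1 : (Nat.choose (2*j) j : ℝ) = (Nat.factorial (2*j) : ℝ) /
      ((Nat.factorial j : ℝ) * (Nat.factorial j : ℝ)) := by
    rw [Nat.cast_choose ℝ (by omega : j ≤ 2*j), show 2*j-j = j from by omega]
  have h2 : (Nat.choose (2*k) k : ℝ) = (Nat.factorial (2*k) : ℝ) /
      ((Nat.factorial k : ℝ) * (Nat.factorial k : ℝ)) := by
    rw [Nat.cast_choose ℝ (by omega : k ≤ 2*k), show 2*k-k = k from by omega]
  have h3 : (Nat.choose (2*j+2*k+1) (j+k) : ℝ) = (Nat.factorial (2*j+2*k+1) : ℝ) /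
      ((Nat.factorial (j+k) : ℝ) * (Nat.factorial (j+k+1) : ℝ)) := by
    rw [Nat.cast_choose ℝ (by omega : j+k ≤ 2*j+2*k+1),
      show 2*j+2*k+1-(j+k) = j+k+1 from by omega]
  have e1 : (Nat.factorial (j+k+1) : ℝ) = ((j:ℝ)+k+1) * (Nat.factorial (j+k) : ℝ) := by
    rw [show j+k+1 = (j+k)+1 from rfl, Nat.factorial_succ]; push_cast; ring
  have e2 : (Nat.factorial (2*k+1) : ℝ) = (2*(k:ℝ)+1) * (Nat.factorial (2*k) : ℝ) := by
    rw [Nat.factorial_succ]; push_cast; ring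
  have e3 : (Nat.factorial (2*j+2*k+2) : ℝ)
      = (2*(j:ℝ)+2*k+2) * (Nat.factorial (2*j+2*k+1) : ℝ) := by
    rw [show 2*j+2*k+2 = (2*j+2*k+1)+1 from rfl, Nat.factorial_succ]; push_cast; ring
  have f0 : ∀ r : ℕ, ((Nat.factorial r : ℝ)) ≠ 0 := fun r =>
    Nat.cast_ne_zero.mpr (Nat.factorial_ne_zero r)
  rw [h1, h2, h3, e1, e2, e3]
  push_cast
  field_simp

lemma key_integral (lam : ℝ) (hlam : 0 < lam) (m : ℕ) (hm : 1 ≤ m) (f : ℝ → ℝ)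
    (hf : ∀ x > (0:ℝ), f x = lam * Real.exp (-(lam * x)))
    (hfzero : ∀ x ≤ (0:ℝ), f x = 0)
    (n i : ℕ) (hi1 : 1 ≤ i) (hin : i ≤ n) :
    ∫ x, x ^ m * osPdf f (cdfOf f) i n x ^ 2
      = Cin i n * ((2*n-2*i+1 : ℕ) : ℝ) / (2 * lam ^ (m-1)) *
        ∫ x in Ioi (0:ℝ), x ^ m * expOsPdf i n x := by
  have hlam' : lam ≠ 0 := hlam.ne'
  set c : ℝ := (Nat.factorial n : ℝ) /
    ((Nat.factorial (i - 1) : ℝ) * (Nat.factorial (n - i) : ℝ)) with hc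
  set d : ℝ := (Nat.factorial (2*n) : ℝ) /
    ((Nat.factorial (2*i - 2) : ℝ) * (Nat.factorial (2*n - 2*i + 1) : ℝ)) with hd
  set K : ℕ := 2*n - 2*i + 2 with hKdef
  set g : ℝ → ℝ := fun y => y^m * (1 - Real.exp (-y))^(2*i-2) * Real.exp (-((K:ℝ) * y))
    with hg
  -- Step A
  have stepA : ∫ x, x ^ m * osPdf f (cdfOf f) i n x ^ 2
      = ∫ x in Ioi (0:ℝ), x ^ m * osPdf f (cdfOf f) i n x ^ 2 := by
    refine (setIntegral_eq_integral_of_forall_compl_eq_zero ?_).symm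
    intro x hx
    have hx' : x ≤ 0 := not_lt.mp (by simpa using hx)
    simp [osPdf, hfzero x hx']
  -- Step B: pointwise identity on Ioi 0
  have stepB : ∀ x ∈ Ioi (0:ℝ), x ^ m * osPdf f (cdfOf f) i n x ^ 2
      = (c^2 * lam^2 * (lam^m)⁻¹) * g (lam * x) := by
    intro x hx
    have hx : (0:ℝ) < x := hx
    have hF := cdfOf_exp lam hlam f hf hfzero hx
    set E : ℝ := Real.exp (-(lam * x)) with hE
    set T : ℝ := 1 - E with hT
    have hos : osPdf f (cdfOf f) i n x = c * T^(i-1) * E^(n-i) * (lam * E) := by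
      rw [osPdf, hF, hf x hx, hT, show (1:ℝ) - (1 - E) = E from by ring, ← hc, ← hE]
    have hgval : g (lam * x) = lam^m * x^m * T^(2*i-2) * E^K := by
      rw [hg]
      simp only
      rw [mul_pow]
      rw [show Real.exp (-((K:ℝ) * (lam * x))) = E^K by
        rw [hE, ← Real.exp_nat_mul]; congr 1; ring]
    rw [hos, hgval]
    have ht2 : (T^(i-1))^2 = T^(2*i-2) := by rw [← pow_mul]; congr 1; omega
    have he2 : (E^(n-i))^2 * E^2 = E^K := by
      rw [← pow_mul, ← pow_add]; congr 1; omega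
    have expand : x ^ m * (c * T^(i-1) * E^(n-i) * (lam * E))^2
        = c^2 * lam^2 * (x^m * (T^(i-1))^2 * ((E^(n-i))^2 * E^2)) := by ring
    rw [expand, ht2, he2]
    field_simp
  -- Step D: scaling
  have stepD : ∫ x in Ioi (0:ℝ), g (lam * x) = lam⁻¹ * ∫ y in Ioi (0:ℝ), g y := by
    have := integral_comp_mul_left_Ioi g 0 hlam
    rwa [mul_zero, smul_eq_mul] at this
  -- Step E
  have stepE : ∫ x in Ioi (0:ℝ), x ^ m * expOsPdf i n x = d * ∫ y in Ioi (0:ℝ), g y := by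
    rw [← MeasureTheory.integral_const_mul]
    refine setIntegral_congr_fun measurableSet_Ioi (fun x _ => ?_)
    rw [expOsPdf, hg]
    simp only
    rw [hd]
    ring
  rw [stepA, setIntegral_congr_fun measurableSet_Ioi stepB, MeasureTheory.integral_const_mul, stepD,
    stepE]
  -- scalar identity
  rw [show (c^2 * lam^2 * (lam^m)⁻¹) * (lam⁻¹ * ∫ y in Ioi (0:ℝ), g y)
      = (c^2 * (lam^2 * (lam^m)⁻¹ * lam⁻¹)) * ∫ y in Ioi (0:ℝ), g y from by ring,
    show Cin i n * ((2*n-2*i+1 : ℕ) : ℝ) / (2 * lam ^ (m-1)) * (d * ∫ y in Ioi (0:ℝ), g y)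
      = (Cin i n * ((2*n-2*i+1 : ℕ) : ℝ) * d / (2 * lam ^ (m-1))) * ∫ y in Ioi (0:ℝ), g y
      from by ring]
  congr 1
  have hlp : lam^2 * (lam^m)⁻¹ * lam⁻¹ = (lam ^ (m-1))⁻¹ := by
    obtain ⟨p, rfl⟩ : ∃ p, m = p + 1 := ⟨m - 1, by omega⟩
    rw [Nat.add_sub_cancel, pow_succ]
    field_simp
    ring
  rw [hlp]
  -- now combinatorial part
  obtain ⟨j, rfl⟩ : ∃ j, i = j + 1 := ⟨i - 1, by omega⟩
  obtain ⟨k, rfl⟩ : ∃ k, n = (j + 1) + k := ⟨n - (j+1), by omega⟩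
  have hcc : c = (Nat.factorial (j+k+1) : ℝ) / (Nat.factorial j * Nat.factorial k) := by
    rw [hc, show (j+1) - 1 = j from rfl, show (j+1)+k - (j+1) = k from by omega,
      show (j+1)+k = j+k+1 from by omega]
  have hdd : d = (Nat.factorial (2*j+2*k+2) : ℝ) /
      ((Nat.factorial (2*j) : ℝ) * (Nat.factorial (2*k+1) : ℝ)) := by
    rw [hd, show 2*(j+1) - 2 = 2*j from by omega,
      show 2*((j+1)+k) - 2*(j+1) + 1 = 2*k+1 from by omega,
      show 2*((j+1)+k) = 2*j+2*k+2 from by omega]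
  have hCC : Cin (j+1) ((j+1)+k) = (Nat.choose (2*j) j : ℝ) * (Nat.choose (2*k) k : ℝ) /
      (Nat.choose (2*j+2*k+1) (j+k) : ℝ) := by
    rw [Cin, show 2*(j+1) - 2 = 2*j from by omega, show (j+1) - 1 = j from rfl,
      show 2*((j+1)+k) - 2*(j+1) = 2*k from by omega,
      show (j+1)+k - (j+1) = k from by omega,
      show 2*((j+1)+k) - 1 = 2*j+2*k+1 from by omega,
      show (j+1)+k - 1 = j+k from by omega]
  have hkk : (2*((j+1)+k) - 2*(j+1) + 1 : ℕ) = 2*k+1 := by omega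
  rw [hcc, hCC, hkk, comb_id j k, hdd]
  ring

lemma final_alg (h : ℕ) (Ca Cb ka kb Ma Mb N P : ℝ) (hP : P ≠ 0) (hN : N ≠ 0) :
    -(1/2) * (Ca * ka / (2*P) * Ma)^h * (Cb * kb / (2*P) * Mb)^h
      = -(N * Ca^h * Cb^h * ka^h * kb^h / (2^(h+h+1) * N * P^(h+h))) * Ma^h * Mb^h := by
  field_simp
  simp only [div_pow, mul_pow, pow_add, pow_one]
  field_simp

/-- GWE of the PRSS data of an exponential distribution with weight
`w₁(x) = x^m`, for even sample size `n`, in terms of moments of exponential order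
statistics. -/
theorem Jprss_exponential_of_even
    (lam : ℝ) (hlam : 0 < lam) (m : ℕ) (hm : 1 ≤ m)
    (f : ℝ → ℝ)
    (hf : ∀ x > (0:ℝ), f x = lam * Real.exp (-(lam * x))) (hfzero : ∀ x ≤ (0:ℝ), f x = 0)
    (n a b : ℕ) (hn : 2 ≤ n) (hne : Even n)
    (ha1 : 1 ≤ a) (han : a ≤ n) (hb1 : 1 ≤ b) (hbn : b ≤ n) :
    Jprss (fun x => x ^ m) f (cdfOf f) n a b =
      -(((n : ℝ) ^ n * Cin a n ^ (n / 2) * Cin b n ^ (n / 2)) *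
            ((2 * n - 2 * a + 1 : ℕ) : ℝ) ^ (n / 2) *
            ((2 * n - 2 * b + 1 : ℕ) : ℝ) ^ (n / 2) /
          ((2 : ℝ) ^ (n + 1) * (n : ℝ) ^ n * lam ^ (n * (m - 1)))) *
        (∫ x in Ioi (0:ℝ), x ^ m * expOsPdf a n x) ^ (n / 2) *
        (∫ x in Ioi (0:ℝ), x ^ m * expOsPdf b n x) ^ (n / 2) := by
  unfold Jprss
  rw [if_pos hne]
  simp only []
  rw [key_integral lam hlam m hm f hf hfzero n a ha1 han,
    key_integral lam hlam m hm f hf hfzero n b hb1 hbn]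
  obtain ⟨h, rfl⟩ := hne
  rw [show (h + h) / 2 = h from by omega,
    show (h + h) * (m - 1) = (m - 1) * (h + h) from Nat.mul_comm _ _, pow_mul]
  exact final_alg h (Cin a (h+h)) (Cin b (h+h)) _ _ _ _ _ _
    (pow_ne_zero _ hlam.ne')
    (pow_ne_zero _ (by exact_mod_cast (by omega : (h+h:ℕ) ≠ 0)))
end
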